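/- arXiv:2309.06224 — 3 statements merged into one kernel-verified Lean document; each statement's English description precedes it below -/
import Mathlib

section
/- (Contracting lemma.) Let G be an infinite hyperbolic group with a fixed finite generating set whose Cayley graph is δ-hyperbolic. Let g ∈ G and let A ∈ 𝒜_n(G) be an infinite atom with n > 2|g| + 39δ + 13. Then there exists an infinite atom A' ∈ 𝒜(G) such that gA ⊆ A' and N(A') is contained in the (18δ+6)-neighborhood of g·N(A). -/
open scoped Classical

noncomputable section

/-- The word length of `g` with respect to a generating set `S` (using letters from
`S ∪ S⁻¹`). -/
def wordLength {G : Type} [Group G] (S : Set G) (g : G) : ℕ :=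
  sInf {n | ∃ l : List G, l.length = n ∧ (∀ x ∈ l, x ∈ S ∨ x⁻¹ ∈ S) ∧ l.prod = g}

/-- The word metric on `G` with respect to `S`. -/
def wordDist {G : Type} [Group G] (S : Set G) (x y : G) : ℕ :=
  wordLength S (x⁻¹ * y)

/-- `p 0, p 1, …, p n` is a geodesic segment for the word metric. -/
def IsGeodesicSeg {G : Type} [Group G] (S : Set G) (p : ℕ → G) (n : ℕ) : Prop :=
  ∀ i j : ℕ, i ≤ j → j ≤ n → wordDist S (p i) (p j) = j - i

/-- The Cayley graph of `G` with respect to `S` is `δ`-hyperbolic: every side of every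
geodesic triangle lies in the `δ`-neighborhood of the union of the other two sides. -/
def SlimTriangles {G : Type} [Group G] (S : Set G) (δ : ℝ) : Prop :=
  ∀ (p q r : ℕ → G) (np nq nr : ℕ),
    IsGeodesicSeg S p np → IsGeodesicSeg S q nq → IsGeodesicSeg S r nr →
    p np = q 0 → q nq = r 0 → r nr = p 0 →
    ∀ i ≤ np, ∃ j : ℕ,
      (j ≤ nq ∧ (wordDist S (p i) (q j) : ℝ) ≤ δ) ∨
      (j ≤ nr ∧ (wordDist S (p i) (r j) : ℝ) ≤ δ)

/-- A group is hyperbolic if it has a finite generating set whose Cayley graph is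
`δ`-hyperbolic for some `δ > 0`. -/
def IsHyperbolicGroup (G : Type) [Group G] : Prop :=
  ∃ S : Set G, S.Finite ∧ Subgroup.closure S = ⊤ ∧ ∃ δ : ℝ, 0 < δ ∧ SlimTriangles S δ

/-- The ball of radius `n` about the identity. -/
def ball {G : Type} [Group G] (S : Set G) (n : ℕ) : Set G :=
  {x | wordLength S x ≤ n}

/-- `x ∼ y` for the ball `B_n`: the function `d_x - d_y` is constant on `B_n`. -/
def SameAtom {G : Type} [Group G] (S : Set G) (n : ℕ) (x y : G) : Prop :=
  ∀ a ∈ ball S n, ∀ b ∈ ball S n,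
    (wordDist S x a : ℤ) - (wordDist S y a : ℤ) =
      (wordDist S x b : ℤ) - (wordDist S y b : ℤ)

/-- The atom for `B_n` containing `x`. -/
def atomOf {G : Type} [Group G] (S : Set G) (n : ℕ) (x : G) : Set G :=
  {y | SameAtom S n x y}

/-- `𝒜_n(G)`: the infinite atoms for `B_n`. -/
def InfAtoms {G : Type} [Group G] (S : Set G) (n : ℕ) : Set (Set G) :=
  {A | (∃ x, A = atomOf S n x) ∧ A.Infinite}

/-- `g` is a morphism from the atom `A₁ ∈ 𝒜_m(G)` to the atom `A₂ ∈ 𝒜_n(G)`. -/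
def IsMorphism {G : Type} [Group G] (S : Set G) (g : G) (m : ℕ) (A₁ : Set G)
    (n : ℕ) (A₂ : Set G) : Prop :=
  ((g * ·) '' A₁ = A₂) ∧
  (∀ k : ℕ, (g * ·) '' (A₁ ∩ ball S (m + k)) = A₂ ∩ ball S (n + k)) ∧
  ∀ k : ℕ, 0 < k → ∀ A' ∈ InfAtoms S (m + k), A' ⊆ A₁ →
    (g * ·) '' A' ∈ InfAtoms S (n + k) ∧ (g * ·) '' A' ⊆ A₂

/-- Two atoms have the same type if there is a morphism between them. -/
def SameType {G : Type} [Group G] (S : Set G) (m : ℕ) (A₁ : Set G) (n : ℕ)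
    (A₂ : Set G) : Prop :=
  ∃ g : G, IsMorphism S g m A₁ n A₂

/-- `N(A)`: the set of points of `B_n` at which `d̄_A` attains its minimum, i.e. the set
of nearest neighbors in `B_n` of the points of `A`. -/
def nearestSet {G : Type} [Group G] (S : Set G) (n : ℕ) (A : Set G) : Set G :=
  {p | p ∈ ball S n ∧ ∀ x ∈ A, ∀ q ∈ ball S n, wordDist S x p ≤ wordDist S x q}

namespace CL

variable {G : Type} [Group G] {S : Set G}

lemma wl_le {g : G} {l : List G} (hl : ∀ x ∈ l, x ∈ S ∨ x⁻¹ ∈ S) (hp : l.prod = g) :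
    wordLength S g ≤ l.length := Nat.sInf_le ⟨l, rfl, hl, hp⟩

lemma wl_exists (hgen : Subgroup.closure S = ⊤) (g : G) :
    ∃ l : List G, (∀ x ∈ l, x ∈ S ∨ x⁻¹ ∈ S) ∧ l.prod = g := by
  have hg : g ∈ Submonoid.closure (S ∪ S⁻¹) := by
    rw [← Subgroup.closure_toSubmonoid, hgen]
    exact Subgroup.mem_top g
  obtain ⟨l, hl, hp⟩ := Submonoid.exists_list_of_mem_closure hg
  exact ⟨l, fun x hx => by
    rcases hl x hx with h | h
    · exact Or.inl h
    · exact Or.inr (Set.mem_inv.mp h), hp⟩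

lemma wl_spec (hgen : Subgroup.closure S = ⊤) (g : G) :
    ∃ l : List G, l.length = wordLength S g ∧ (∀ x ∈ l, x ∈ S ∨ x⁻¹ ∈ S) ∧ l.prod = g := by
  have hne : {k | ∃ l : List G, l.length = k ∧ (∀ x ∈ l, x ∈ S ∨ x⁻¹ ∈ S) ∧ l.prod = g}.Nonempty := by
    obtain ⟨l, hl, hp⟩ := wl_exists hgen g
    exact ⟨l.length, l, rfl, hl, hp⟩
  exact Nat.sInf_mem hne

lemma wl_one : wordLength S (1 : G) = 0 :=
  Nat.le_zero.mp (wl_le (l := []) (by simp) (by simp))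

lemma wl_mul_le (hgen : Subgroup.closure S = ⊤) (g h : G) :
    wordLength S (g * h) ≤ wordLength S g + wordLength S h := by
  obtain ⟨l₁, hl₁, hm₁, hp₁⟩ := wl_spec hgen g
  obtain ⟨l₂, hl₂, hm₂, hp₂⟩ := wl_spec hgen h
  calc wordLength S (g * h) ≤ (l₁ ++ l₂).length := by
        refine wl_le (fun x hx => ?_) (by simp [hp₁, hp₂])
        rcases List.mem_append.mp hx with h' | h'
        · exact hm₁ x h'
        · exact hm₂ x h'
    _ = _ := by simp [hl₁, hl₂]

lemma wl_inv_le (hgen : Subgroup.closure S = ⊤) (g : G) :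
    wordLength S g⁻¹ ≤ wordLength S g := by
  obtain ⟨l, hl, hm, hp⟩ := wl_spec hgen g
  refine le_trans (wl_le (l := (l.map (·⁻¹)).reverse) ?_ ?_) ?_
  · intro x hx
    simp only [List.mem_reverse, List.mem_map] at hx
    obtain ⟨y, hy, rfl⟩ := hx
    rcases hm y hy with h | h
    · exact Or.inr (by simpa using h)
    · exact Or.inl h
  · rw [← hp, List.prod_inv_reverse]
  · simp [hl]

lemma wl_inv (hgen : Subgroup.closure S = ⊤) (g : G) :
    wordLength S g⁻¹ = wordLength S g :=
  le_antisymm (wl_inv_le hgen g) (by simpa using wl_inv_le hgen g⁻¹)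

lemma dist_self (x : G) : wordDist S x x = 0 := by simp [wordDist, wl_one]

lemma dist_symm (hgen : Subgroup.closure S = ⊤) (x y : G) :
    wordDist S x y = wordDist S y x := by
  have : (x⁻¹ * y)⁻¹ = y⁻¹ * x := by group
  rw [wordDist, wordDist, ← this, wl_inv hgen]

lemma dist_triangle (hgen : Subgroup.closure S = ⊤) (x y z : G) :
    wordDist S x z ≤ wordDist S x y + wordDist S y z := by
  have : x⁻¹ * z = (x⁻¹ * y) * (y⁻¹ * z) := by group
  rw [wordDist, this]
  exact wl_mul_le hgen _ _

lemma dist_one_left (x : G) : wordDist S 1 x = wordLength S x := by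
  simp [wordDist]

lemma dist_left_inv (g x y : G) : wordDist S (g * x) (g * y) = wordDist S x y := by
  simp [wordDist, mul_assoc]

/-- `|x| ≤ |b| + d(b,x)`. -/
lemma wl_le_add (hgen : Subgroup.closure S = ⊤) (x b : G) :
    wordLength S x ≤ wordLength S b + wordDist S b x := by
  have := wl_mul_le hgen b (b⁻¹ * x)
  simpa [wordDist] using this

end CL

namespace CL

variable {G : Type} [Group G] {S : Set G}

lemma geodesic_exists (hgen : Subgroup.closure S = ⊤) (x y : G) :
    ∃ p : ℕ → G, IsGeodesicSeg S p (wordDist S x y) ∧ p 0 = x ∧ p (wordDist S x y) = y := by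
  obtain ⟨l, hlen, hm, hp⟩ := wl_spec hgen (x⁻¹ * y)
  set L := wordDist S x y with hL
  have hlenL : l.length = L := hlen
  refine ⟨fun i => x * (l.take i).prod, ?_, by simp, ?_⟩
  · have hseg : ∀ i j, i ≤ j → j ≤ L →
        wordDist S (x * (l.take i).prod) (x * (l.take j).prod) ≤ j - i := by
      intro i j hij hjL
      have hsplit : l.take j = l.take i ++ (l.drop i).take (j - i) := by
        rw [← List.take_add]
        congr 1
        omega
      have hprod : (x * (l.take i).prod)⁻¹ * (x * (l.take j).prod)
          = ((l.drop i).take (j - i)).prod := by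
        rw [hsplit, List.prod_append]; group
      rw [wordDist, hprod]
      refine le_trans (wl_le (fun z hz => hm z ?_) rfl) (by
        simp only [List.length_take, List.length_drop]
        omega)
      exact List.mem_of_mem_drop (List.mem_of_mem_take hz)
    intro i j hij hjL
    show wordDist S (x * (l.take i).prod) (x * (l.take j).prod) = j - i
    have h1 : wordDist S (x * (l.take i).prod) (x * (l.take j).prod) ≤ j - i :=
      hseg i j hij hjL
    have h0 : wordDist S (x * (l.take 0).prod) (x * (l.take i).prod) ≤ i := by
      simpa using hseg 0 i (Nat.zero_le _) (le_trans hij hjL)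
    have h2 : wordDist S (x * (l.take j).prod) (x * (l.take L).prod) ≤ L - j := by
      simpa using hseg j L hjL le_rfl
    have hxy : wordDist S (x * (l.take 0).prod) (x * (l.take L).prod) = L := by
      rw [← hlenL, List.take_length]
      simp only [List.take_zero, List.prod_nil, mul_one, wordDist, inv_mul_cancel_left]
      rw [hp]
      exact hlen.symm
    have hge := dist_triangle hgen (x * (l.take 0).prod) (x * (l.take i).prod)
        (x * (l.take L).prod)
    have hge2 := dist_triangle hgen (x * (l.take i).prod) (x * (l.take j).prod)
        (x * (l.take L).prod)
    omega
  · show x * (l.take L).prod = y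
    rw [← hlenL, List.take_length, hp]; group

lemma geodesic_translate {p : ℕ → G} {L : ℕ} (g : G) (hp : IsGeodesicSeg S p L) :
    IsGeodesicSeg S (fun i => g * p i) L := by
  intro i j hij hjL
  simpa [dist_left_inv] using hp i j hij hjL

lemma geodesic_reverse (hgen : Subgroup.closure S = ⊤) {p : ℕ → G} {L : ℕ}
    (hp : IsGeodesicSeg S p L) :
    IsGeodesicSeg S (fun i => p (L - i)) L := by
  intro i j hij hjL
  have := hp (L - j) (L - i) (by omega) (by omega)
  rw [dist_symm hgen] at this
  show wordDist S (p (L - i)) (p (L - j)) = j - i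
  rw [this]
  omega

lemma geodesic_concat (hgen : Subgroup.closure S = ⊤) {p q : ℕ → G} {Lp Lq : ℕ}
    (hp : IsGeodesicSeg S p Lp) (hq : IsGeodesicSeg S q Lq)
    (hend : p Lp = q 0)
    (htot : wordDist S (p 0) (q Lq) = Lp + Lq) :
    IsGeodesicSeg S (fun i => if i ≤ Lp then p i else q (i - Lp)) (Lp + Lq) := by
  set r : ℕ → G := fun i => if i ≤ Lp then p i else q (i - Lp) with hr
  have hr0 : r 0 = p 0 := by simp [hr]
  have hrL : r (Lp + Lq) = q Lq := by
    by_cases h : Lp + Lq ≤ Lp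
    · have hLq : Lq = 0 := by omega
      simp only [hr, if_pos h, hLq, add_zero]
      rw [hend]
      simp [hLq]
    · simp only [hr, if_neg h]
      congr 1
      omega
  have hmid : ∀ i j, i ≤ j → j ≤ Lp + Lq → wordDist S (r i) (r j) ≤ j - i := by
    intro i j hij hjL
    by_cases hj : j ≤ Lp
    · have := hp i j hij hj
      simp only [hr, if_pos (le_trans hij hj), if_pos hj]
      omega
    · by_cases hi : i ≤ Lp
      · have h1 := hp i Lp hi le_rfl
        have h2 := hq 0 (j - Lp) (Nat.zero_le _) (by omega)
        have htr := dist_triangle hgen (p i) (p Lp) (q (j - Lp))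
        rw [hend] at h1 htr
        simp only [hr, if_pos hi, if_neg hj]
        omega
      · have h2 := hq (i - Lp) (j - Lp) (by omega) (by omega)
        simp only [hr, if_neg hi, if_neg hj]
        omega
  intro i j hij hjL
  have h1 := hmid i j hij hjL
  have h0 := hmid 0 i (Nat.zero_le _) (le_trans hij hjL)
  have h2 := hmid j (Lp + Lq) hjL le_rfl
  have hT : wordDist S (r 0) (r (Lp + Lq)) = Lp + Lq := by rw [hr0, hrL]; exact htot
  have htr1 := dist_triangle hgen (r 0) (r i) (r (Lp + Lq))
  have htr2 := dist_triangle hgen (r i) (r j) (r (Lp + Lq))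
  show wordDist S (r i) (r j) = j - i
  omega

/-- On a geodesic starting at `1`, the norm of `p i` is `i`. -/
lemma geodesic_norm (hgen : Subgroup.closure S = ⊤) {p : ℕ → G} {L : ℕ}
    (hp : IsGeodesicSeg S p L) (h0 : p 0 = 1) {i : ℕ} (hi : i ≤ L) :
    wordLength S (p i) = i := by
  have := hp 0 i (Nat.zero_le _) hi
  rw [h0, dist_one_left] at this
  omega

end CL

namespace CL

variable {G : Type} [Group G] {S : Set G}

lemma one_mem_ball (n : ℕ) : (1 : G) ∈ ball S n := by simp [ball, wl_one]

lemma sameAtom_refl (n : ℕ) (x : G) : SameAtom S n x x := by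
  intro a _ b _; ring

lemma sameAtom_symm {n : ℕ} {x y : G} (h : SameAtom S n x y) : SameAtom S n y x := by
  intro a ha b hb
  have := h a ha b hb
  linarith

lemma sameAtom_trans {n : ℕ} {x y z : G} (h1 : SameAtom S n x y) (h2 : SameAtom S n y z) :
    SameAtom S n x z := by
  intro a ha b hb
  have e1 := h1 a ha b hb
  have e2 := h2 a ha b hb
  linarith

lemma wl_eq_zero (hgen : Subgroup.closure S = ⊤) {x : G} (h : wordLength S x = 0) :
    x = 1 := by
  obtain ⟨l, hlen, _, hp⟩ := wl_spec hgen x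
  rw [h, List.length_eq_zero_iff] at hlen
  rw [hlen] at hp
  simpa using hp.symm

lemma dist_pos (hgen : Subgroup.closure S = ⊤) {x y : G} (h : x ≠ y) :
    1 ≤ wordDist S x y := by
  rcases Nat.eq_zero_or_pos (wordDist S x y) with h0 | h0
  · exact absurd (inv_mul_eq_one.mp (wl_eq_zero hgen h0)) h
  · exact h0

/-- Members of a non-singleton atom for `B_n` have norm at least `n`. -/
lemma atom_norm_ge (hgen : Subgroup.closure S = ⊤) {n : ℕ} {x y : G}
    (hxy : SameAtom S n x y) (hne : x ≠ y) : n ≤ wordLength S x := by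
  by_contra hlt
  push_neg at hlt
  obtain ⟨p, hp, hp0, hpL⟩ := geodesic_exists hgen y x
  set L := wordDist S y x with hL
  have hL1 : 1 ≤ L := by
    rcases Nat.eq_zero_or_pos L with h0 | h0
    · exact absurd (inv_mul_eq_one.mp (wl_eq_zero hgen h0)).symm hne
    · exact h0
  have hz1 : wordDist S y (p (L - 1)) = L - 1 := by
    have := hp 0 (L - 1) (Nat.zero_le _) (by omega)
    rwa [hp0] at this
  have hz2 : wordDist S (p (L - 1)) x = 1 := by
    have := hp (L - 1) L (by omega) le_rfl
    rw [hpL] at this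
    rw [this]
    omega
  have hzwl : wordLength S (p (L - 1)) ≤ wordLength S x + 1 := by
    have h1 := wl_le_add hgen (p (L - 1)) x
    rw [dist_symm hgen x (p (L-1)), hz2] at h1
    omega
  have hxball : x ∈ ball S n := le_of_lt hlt
  have hzball : p (L - 1) ∈ ball S n := by
    simp only [ball, Set.mem_setOf_eq]
    omega
  have := hxy x hxball (p (L - 1)) hzball
  rw [dist_self] at this
  have hyx : wordDist S y x = L := rfl
  have hxz : wordDist S x (p (L - 1)) = 1 := by
    rw [dist_symm hgen]; exact hz2
  rw [hyx, hxz, hz1] at this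
  omega

/-- distance from a far point to a ball point is at least `|x| - k`. -/
lemma dist_ball_ge (hgen : Subgroup.closure S = ⊤) {k : ℕ} {x b : G} (hb : b ∈ ball S k) :
    wordLength S x ≤ k + wordDist S x b := by
  have := wl_le_add hgen x b
  rw [dist_symm hgen b x] at this
  have hbk : wordLength S b ≤ k := hb
  omega

/-- There is a point of norm `k` at distance `|x| - k` from `x`. -/
lemma exists_nearest (hgen : Subgroup.closure S = ⊤) {k : ℕ} {x : G}
    (hk : k ≤ wordLength S x) :
    ∃ w : G, wordLength S w = k ∧ wordDist S x w = wordLength S x - k := by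
  obtain ⟨p, hp, hp0, hpL⟩ := geodesic_exists hgen 1 x
  have hLwl : wordDist S 1 x = wordLength S x := dist_one_left x
  refine ⟨p k, ?_, ?_⟩
  · exact geodesic_norm hgen hp hp0 (by omega)
  · have := hp k (wordDist S 1 x) (by omega) le_rfl
    rw [hpL] at this
    rw [dist_symm hgen, this, hLwl]

end CL

namespace CL

variable {G : Type} [Group G] {S : Set G}

/-- Every geodesic from `x` to `z` has a point of norm at most `(x|z)₁ + 2δ + 1`. -/
lemma switch_lemma (hgen : Subgroup.closure S = ⊤) {δ : ℝ} (hδ : 0 < δ)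
    (hhyp : SlimTriangles S δ) {x z : G} {P : ℕ → G} {L : ℕ}
    (hL : L = wordDist S x z)
    (hP : IsGeodesicSeg S P L) (hP0 : P 0 = x) (hPL : P L = z) :
    ∃ i ≤ L, 2 * (wordLength S (P i) : ℝ) ≤
      (wordLength S x : ℝ) + (wordLength S z : ℝ) - (L : ℝ) + 4 * δ + 2 := by
  classical
  -- the two other sides
  obtain ⟨R, hR, hR0, hRe⟩ := geodesic_exists hgen 1 x
  obtain ⟨Q, hQ, hQ0, hQe⟩ := geodesic_exists hgen z 1
  set Lx := wordDist S 1 x with hLx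
  set Lz := wordDist S z 1 with hLz
  have hLxw : Lx = wordLength S x := dist_one_left x
  have hLzw : Lz = wordLength S z := by
    rw [hLz, dist_symm hgen, dist_one_left]
  have hslim := hhyp P Q R L Lz Lx hP hQ hR (by rw [hPL, hQ0]) (by rw [hQe, hR0])
    (by rw [hRe, hP0])
  set I : Finset ℕ :=
    (Finset.range (L + 1)).filter
      (fun i => ∃ j, j ≤ Lx ∧ (wordDist S (P i) (R j) : ℝ) ≤ δ) with hI
  have h0I : 0 ∈ I := by
    refine Finset.mem_filter.mpr ⟨Finset.mem_range.mpr (by omega), Lx, le_rfl, ?_⟩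
    rw [hP0, hRe, dist_self]
    simpa using hδ.le
  have hne : I.Nonempty := ⟨0, h0I⟩
  set i₀ := I.max' hne with hi₀
  have hi₀I : i₀ ∈ I := I.max'_mem hne
  obtain ⟨hi₀r, j₁, hj₁, hd₁⟩ := Finset.mem_filter.mp hi₀I
  have hi₀L : i₀ ≤ L := by have := Finset.mem_range.mp hi₀r; omega
  have hRj₁ : wordLength S (R j₁) = j₁ := geodesic_norm hgen hR hR0 hj₁
  -- `d(x, R j₁) = Lx - j₁`, in addition form
  have hxRj : wordDist S x (R j₁) + j₁ = Lx := by
    have h := hR j₁ Lx hj₁ le_rfl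
    rw [hRe] at h
    rw [dist_symm hgen]
    omega
  by_cases hcase : i₀ = L
  · refine ⟨L, le_rfl, ?_⟩
    rw [hcase, hPL] at hd₁
    -- |z| ≤ j₁ + δ
    have h1 : wordLength S z ≤ wordLength S (R j₁) + wordDist S (R j₁) z :=
      wl_le_add hgen z (R j₁)
    have h1' : (wordLength S z : ℝ) ≤ (j₁ : ℝ) + δ := by
      have hsm : (wordDist S (R j₁) z : ℝ) ≤ δ := by
        rw [dist_symm hgen]; exact hd₁
      have := (Nat.cast_le (α := ℝ)).mpr h1
      push_cast at this
      rw [hRj₁] at h1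
      have := (Nat.cast_le (α := ℝ)).mpr h1
      push_cast [hRj₁] at this
      linarith
    -- L ≤ (Lx - j₁) + δ
    have h2 : wordDist S x z ≤ wordDist S x (R j₁) + wordDist S (R j₁) z :=
      dist_triangle hgen x (R j₁) z
    have h2' : (L : ℝ) ≤ (Lx : ℝ) - (j₁ : ℝ) + δ := by
      have hsm : (wordDist S (R j₁) z : ℝ) ≤ δ := by
        rw [dist_symm hgen]; exact hd₁
      have hc := (Nat.cast_le (α := ℝ)).mpr h2
      push_cast at hc
      have hx' : (wordDist S x (R j₁) : ℝ) + (j₁ : ℝ) = (Lx : ℝ) := by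
        exact_mod_cast congrArg (Nat.cast (R := ℝ)) hxRj
      rw [hL]
      linarith
    rw [hLxw] at h2'
    rw [hPL]
    linarith
  -- main case : the switch happens at `i₀ + 1 ≤ L`
  · have hi1L : i₀ + 1 ≤ L := by omega
    have hnot : i₀ + 1 ∉ I := by
      intro hmem
      have := I.le_max' (i₀ + 1) hmem
      omega
    obtain ⟨j₂, hj₂⟩ := hslim (i₀ + 1) hi1L
    have hQcase : j₂ ≤ Lz ∧ (wordDist S (P (i₀ + 1)) (Q j₂) : ℝ) ≤ δ := by
      rcases hj₂ with h | h
      · exact h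
      · exact absurd (Finset.mem_filter.mpr
          ⟨Finset.mem_range.mpr (by omega), j₂, h.1, h.2⟩) hnot
    obtain ⟨hj₂L, hd₂⟩ := hQcase
    refine ⟨i₀ + 1, hi1L, ?_⟩
    -- |P i₀| ≤ j₁ + δ
    have hA1 : (wordLength S (P i₀) : ℝ) ≤ (j₁ : ℝ) + δ := by
      have h1 : wordLength S (P i₀) ≤ wordLength S (R j₁) + wordDist S (R j₁) (P i₀) :=
        wl_le_add hgen (P i₀) (R j₁)
      have hsm : (wordDist S (R j₁) (P i₀) : ℝ) ≤ δ := by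
        rw [dist_symm hgen]; exact hd₁
      have := (Nat.cast_le (α := ℝ)).mpr h1
      push_cast [hRj₁] at this
      linarith
    -- i₀ ≤ (Lx - j₁) + δ
    have hA2 : (i₀ : ℝ) ≤ (Lx : ℝ) - (j₁ : ℝ) + δ := by
      have hdi : wordDist S x (P i₀) = i₀ := by
        have := hP 0 i₀ (Nat.zero_le _) hi₀L
        rw [hP0] at this
        omega
      have htr : wordDist S x (P i₀) ≤ wordDist S x (R j₁) + wordDist S (R j₁) (P i₀) :=
        dist_triangle hgen x (R j₁) (P i₀)
      have hsm : (wordDist S (R j₁) (P i₀) : ℝ) ≤ δ := by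
        rw [dist_symm hgen]; exact hd₁
      have hc := (Nat.cast_le (α := ℝ)).mpr htr
      push_cast [hdi] at hc
      have hx' : (wordDist S x (R j₁) : ℝ) + (j₁ : ℝ) = (Lx : ℝ) := by
        exact_mod_cast congrArg (Nat.cast (R := ℝ)) hxRj
      linarith
    -- |P (i₀+1)| ≤ |P i₀| + 1
    have hstep : wordLength S (P (i₀ + 1)) ≤ wordLength S (P i₀) + 1 := by
      have h1 : wordDist S (P i₀) (P (i₀ + 1)) = 1 := by
        have := hP i₀ (i₀ + 1) (by omega) hi1L
        omega
      have := wl_le_add hgen (P (i₀ + 1)) (P i₀)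
      omega
    -- |Q j₂| = Lz - j₂ in addition form
    have hQn : wordLength S (Q j₂) + j₂ = Lz := by
      have h := hQ j₂ Lz hj₂L le_rfl
      rw [hQe] at h
      have : wordLength S (Q j₂) = wordDist S (Q j₂) 1 := by
        rw [dist_symm hgen, dist_one_left]
      omega
    -- |P (i₀+1)| ≤ |Q j₂| + δ
    have hB1 : (wordLength S (P (i₀ + 1)) : ℝ) ≤ (wordLength S (Q j₂) : ℝ) + δ := by
      have h1 : wordLength S (P (i₀ + 1)) ≤ wordLength S (Q j₂)
          + wordDist S (Q j₂) (P (i₀ + 1)) := wl_le_add hgen _ (Q j₂)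
      have hsm : (wordDist S (Q j₂) (P (i₀ + 1)) : ℝ) ≤ δ := by
        rw [dist_symm hgen]; exact hd₂
      have := (Nat.cast_le (α := ℝ)).mpr h1
      push_cast at this
      linarith
    -- j₂ ≥ L - (i₀+1) - δ
    have hB2 : (L : ℝ) - (i₀ : ℝ) - 1 ≤ (j₂ : ℝ) + δ := by
      have hdz : wordDist S z (P (i₀ + 1)) + (i₀ + 1) = L := by
        have := hP (i₀ + 1) L hi1L le_rfl
        rw [dist_symm hgen, ← hPL]
        omega
      have hdq : wordDist S z (Q j₂) = j₂ := by
        have := hQ 0 j₂ (Nat.zero_le _) hj₂L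
        rw [hQ0] at this
        omega
      have htr : wordDist S z (P (i₀ + 1)) ≤ wordDist S z (Q j₂)
          + wordDist S (Q j₂) (P (i₀ + 1)) := dist_triangle hgen z (Q j₂) (P (i₀ + 1))
      have hsm : (wordDist S (Q j₂) (P (i₀ + 1)) : ℝ) ≤ δ := by
        rw [dist_symm hgen]; exact hd₂
      have hc := (Nat.cast_le (α := ℝ)).mpr htr
      push_cast [hdq] at hc
      have hz' : (wordDist S z (P (i₀ + 1)) : ℝ) + (i₀ : ℝ) + 1 = (L : ℝ) := by
        exact_mod_cast congrArg (Nat.cast (R := ℝ)) hdz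
      linarith
    have hQn' : (wordLength S (Q j₂) : ℝ) + (j₂ : ℝ) = (Lz : ℝ) := by
      exact_mod_cast congrArg (Nat.cast (R := ℝ)) hQn
    have hstep' : (wordLength S (P (i₀ + 1)) : ℝ) ≤ (wordLength S (P i₀) : ℝ) + 1 := by
      exact_mod_cast (Nat.cast_le (α := ℝ)).mpr hstep
    rw [← hLxw, ← hLzw]
    linarith

/-- The four-point inequality (for twice the Gromov product, based at `1`). -/
lemma four_point (hgen : Subgroup.closure S = ⊤) {δ : ℝ} (hδ : 0 < δ)
    (hhyp : SlimTriangles S δ) (x y z : G) :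
    min ((wordLength S x : ℝ) + (wordLength S y : ℝ) - (wordDist S x y : ℝ))
        ((wordLength S y : ℝ) + (wordLength S z : ℝ) - (wordDist S y z : ℝ))
      ≤ (wordLength S x : ℝ) + (wordLength S z : ℝ) - (wordDist S x z : ℝ)
        + 6 * δ + 2 := by
  obtain ⟨P, hP, hP0, hPL⟩ := geodesic_exists hgen x z
  set L := wordDist S x z with hL
  obtain ⟨i, hiL, hi⟩ := switch_lemma hgen hδ hhyp rfl hP hP0 hPL
  obtain ⟨Q, hQ, hQ0, hQe⟩ := geodesic_exists hgen z y
  obtain ⟨R, hR, hR0, hRe⟩ := geodesic_exists hgen y x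
  set Lzy := wordDist S z y with hLzy
  set Lyx := wordDist S y x with hLyx
  have hslim := hhyp P Q R L Lzy Lyx hP hQ hR (by rw [hPL, hQ0]) (by rw [hQe, hR0])
    (by rw [hRe, hP0])
  obtain ⟨j, hj⟩ := hslim i hiL
  -- midpoint inequality : a point `v` on a geodesic from `u` to `w` has
  -- `|u| + |w| - d(u,w) ≤ 2 |v|`.
  have hmidQ : ∀ j' ≤ Lzy, (wordLength S z : ℝ) + (wordLength S y : ℝ)
      - (wordDist S z y : ℝ) ≤ 2 * (wordLength S (Q j') : ℝ) := by
    intro j' hj'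
    have h1 : wordLength S z ≤ wordLength S (Q j') + wordDist S (Q j') z :=
      wl_le_add hgen z (Q j')
    have h2 : wordLength S y ≤ wordLength S (Q j') + wordDist S (Q j') y :=
      wl_le_add hgen y (Q j')
    have hd1 : wordDist S (Q j') z = j' := by
      have := hQ 0 j' (Nat.zero_le _) hj'
      rw [hQ0] at this
      rw [dist_symm hgen]
      omega
    have hd2 : wordDist S (Q j') y + j' = Lzy := by
      have := hQ j' Lzy hj' le_rfl
      rw [hQe] at this
      omega
    have hc1 := (Nat.cast_le (α := ℝ)).mpr h1
    have hc2 := (Nat.cast_le (α := ℝ)).mpr h2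
    push_cast [hd1] at hc1 hc2
    have hd2' : (wordDist S (Q j') y : ℝ) + (j' : ℝ) = (Lzy : ℝ) := by
      exact_mod_cast congrArg (Nat.cast (R := ℝ)) hd2
    rw [← hLzy]
    linarith
  have hmidR : ∀ j' ≤ Lyx, (wordLength S y : ℝ) + (wordLength S x : ℝ)
      - (wordDist S y x : ℝ) ≤ 2 * (wordLength S (R j') : ℝ) := by
    intro j' hj'
    have h1 : wordLength S y ≤ wordLength S (R j') + wordDist S (R j') y :=
      wl_le_add hgen y (R j')
    have h2 : wordLength S x ≤ wordLength S (R j') + wordDist S (R j') x :=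
      wl_le_add hgen x (R j')
    have hd1 : wordDist S (R j') y = j' := by
      have := hR 0 j' (Nat.zero_le _) hj'
      rw [hR0] at this
      rw [dist_symm hgen]
      omega
    have hd2 : wordDist S (R j') x + j' = Lyx := by
      have := hR j' Lyx hj' le_rfl
      rw [hRe] at this
      omega
    have hc1 := (Nat.cast_le (α := ℝ)).mpr h1
    have hc2 := (Nat.cast_le (α := ℝ)).mpr h2
    push_cast [hd1] at hc1 hc2
    have hd2' : (wordDist S (R j') x : ℝ) + (j' : ℝ) = (Lyx : ℝ) := by
      exact_mod_cast congrArg (Nat.cast (R := ℝ)) hd2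
    rw [← hLyx]
    linarith
  rcases hj with ⟨hjL, hdj⟩ | ⟨hjL, hdj⟩
  · -- close to the Q side : bound `G2(y,z)`
    have hm := hmidQ j hjL
    have hv : (wordLength S (Q j) : ℝ) ≤ (wordLength S (P i) : ℝ) + δ := by
      have h1 : wordLength S (Q j) ≤ wordLength S (P i) + wordDist S (P i) (Q j) :=
        wl_le_add hgen (Q j) (P i)
      have := (Nat.cast_le (α := ℝ)).mpr h1
      push_cast at this
      linarith
    have hsymm1 : wordDist S z y = wordDist S y z := dist_symm hgen z y
    refine le_trans (min_le_right _ _) ?_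
    rw [← hsymm1]
    linarith
  · -- close to the R side : bound `G2(x,y)`
    have hm := hmidR j hjL
    have hv : (wordLength S (R j) : ℝ) ≤ (wordLength S (P i) : ℝ) + δ := by
      have h1 : wordLength S (R j) ≤ wordLength S (P i) + wordDist S (P i) (R j) :=
        wl_le_add hgen (R j) (P i)
      have := (Nat.cast_le (α := ℝ)).mpr h1
      push_cast at this
      linarith
    have hsymm1 : wordDist S y x = wordDist S x y := dist_symm hgen y x
    refine le_trans (min_le_left _ _) ?_
    rw [← hsymm1] at *
    linarith

end CL

/-- **The contracting lemma.**  Let `G` be an infinite hyperbolic group whose Cayley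
graph (for the fixed finite generating set `S`) is `δ`-hyperbolic.  If `g ∈ G` and
`A ∈ 𝒜_n(G)` with `n > 2|g| + 39δ + 13`, then there is an (infinite) atom `A'` with
`gA ⊆ A'` and `N(A')` contained in the `(18δ+6)`-neighborhood of `g·N(A)`. -/
theorem contracting_lemma (G : Type) [Group G] [Infinite G]
    (S : Set G) (hSfin : S.Finite) (hgen : Subgroup.closure S = ⊤)
    (δ : ℝ) (hδ : 0 < δ) (hhyp : SlimTriangles S δ)
    (g : G) (n : ℕ) (A : Set G) (hA : A ∈ InfAtoms S n)
    (hn : (n : ℝ) > 2 * (wordLength S g : ℝ) + 39 * δ + 13) :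
    ∃ (m : ℕ) (A' : Set G), A' ∈ InfAtoms S m ∧ (g * ·) '' A ⊆ A' ∧
      ∀ p ∈ nearestSet S m A', ∃ q ∈ nearestSet S n A,
        (wordDist S p (g * q) : ℝ) ≤ 18 * δ + 6 := by
  classical
  obtain ⟨⟨x₁, hAeq⟩, hAinf⟩ := hA
  have hx₁A : x₁ ∈ A := by rw [hAeq]; exact CL.sameAtom_refl n x₁
  have hsame : ∀ x ∈ A, SameAtom S n x₁ x := fun x hx => by rwa [hAeq] at hx
  have hsame2 : ∀ x ∈ A, ∀ y ∈ A, SameAtom S n x y := fun x hx y hy =>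
    CL.sameAtom_trans (CL.sameAtom_symm (hsame x hx)) (hsame y hy)
  -- all members of `A` have norm at least `n`
  have hAnorm : ∀ x ∈ A, n ≤ wordLength S x := by
    intro x hx
    obtain ⟨y, hy⟩ := (hAinf.diff (Set.finite_singleton x)).nonempty
    exact CL.atom_norm_ge hgen (hsame2 x hx y hy.1)
      (fun h => hy.2 (by simp [← h]))
  set ℓ := wordLength S g with hℓ
  set X := wordLength S x₁ with hX
  have hnX : n ≤ X := hAnorm x₁ hx₁A
  -- geodesic from 1 to x₁
  obtain ⟨α, hα, hα0, hαe⟩ := CL.geodesic_exists hgen 1 x₁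
  set Lα := wordDist S 1 x₁ with hLαdef
  have hLα : Lα = X := CL.dist_one_left x₁
  -- the nearest point q = α n
  set q := α n with hqdef
  have hqn : wordLength S q = n := CL.geodesic_norm hgen hα hα0 (by omega)
  have hqball : q ∈ ball S n := le_of_eq hqn
  have hqd : wordDist S x₁ q + n = X := by
    have h := hα n Lα (by omega) le_rfl
    rw [hαe] at h
    rw [hqdef, CL.dist_symm hgen x₁ (α n)]
    omega
  -- nearest-point distance for every member of the atom
  have hnear : ∀ x ∈ A, wordDist S x q + n = wordLength S x := by
    intro x hx
    obtain ⟨b', hb'n, hb'd⟩ := CL.exists_nearest hgen (hAnorm x hx)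
    have hb'ball : b' ∈ ball S n := le_of_eq hb'n
    have hconst := hsame x hx q hqball b' hb'ball
    have h2 := CL.dist_ball_ge hgen (x := x₁) hb'ball
    have h3 := CL.dist_ball_ge hgen (x := x) hqball
    have h5 := hAnorm x hx
    rw [← hX] at h2
    omega
  have hqnear : q ∈ nearestSet S n A := by
    refine ⟨hqball, fun x hx b hb => ?_⟩
    have h1 := hnear x hx
    have h2 := CL.dist_ball_ge hgen (x := x) hb
    omega
  -- Gromov products within the atom are at least n
  have hG2 : ∀ y ∈ A, 2 * (n : ℝ) ≤ (X : ℝ) + (wordLength S y : ℝ)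
      - (wordDist S x₁ y : ℝ) := by
    intro y hy
    have h1 := CL.dist_triangle hgen x₁ q y
    have h2 : wordDist S q y = wordDist S y q := CL.dist_symm hgen q y
    have h3 := hnear y hy
    have h4 : wordDist S x₁ y + 2 * n ≤ X + wordLength S y := by omega
    have := (Nat.cast_le (α := ℝ)).mpr h4
    push_cast at this
    linarith
  -- basic length facts for g
  have hdxg : wordDist S x₁ g⁻¹ = wordLength S (g * x₁) := by
    rw [wordDist]
    have h : x₁⁻¹ * g⁻¹ = (g * x₁)⁻¹ := by group
    rw [h, CL.wl_inv hgen]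
  have hXle : X ≤ ℓ + wordLength S (g * x₁) := by
    have h := CL.wl_mul_le hgen g⁻¹ (g * x₁)
    rw [inv_mul_cancel_left, CL.wl_inv hgen] at h
    exact h
  have hgxle : wordLength S (g * x₁) ≤ ℓ + X := CL.wl_mul_le hgen g x₁
  set W := wordLength S (g * x₁) with hW
  -- the constant c₀ and the radius m
  set c₀ : ℕ := ⌈11 * δ + 4⌉₊ with hc₀def
  have hc₀l : 11 * δ + 4 ≤ (c₀ : ℝ) := Nat.le_ceil _
  have hc₀u : (c₀ : ℝ) < 11 * δ + 5 := by
    have := Nat.ceil_lt_add_one (by positivity : (0:ℝ) ≤ 11 * δ + 4)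
    linarith
  have hnc : (n : ℝ) > 2 * (ℓ : ℝ) + 39 * δ + 13 := hn
  have hnl : ℓ + c₀ < n := by
    have : (ℓ : ℝ) + (c₀ : ℝ) < (n : ℝ) := by linarith
    exact_mod_cast this
  set m : ℕ := ((n : ℤ) - ((X : ℤ) - (W : ℤ)) - (c₀ : ℤ)).toNat with hmdef
  have hm : (m : ℤ) = (n : ℤ) - ((X : ℤ) - (W : ℤ)) - (c₀ : ℤ) := by
    rw [hmdef]
    rw [Int.toNat_of_nonneg]
    have h1 : (X : ℤ) ≤ (ℓ : ℤ) + (W : ℤ) := by exact_mod_cast hXle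
    have h2 : (ℓ : ℤ) + (c₀ : ℤ) < (n : ℤ) := by exact_mod_cast hnl
    omega
  have hmR : (m : ℝ) = (n : ℝ) - (X : ℝ) + (W : ℝ) - (c₀ : ℝ) := by
    have h := congrArg (Int.cast (R := ℝ)) hm
    push_cast at h
    linarith
  -- the gate lemma : distances from atom points to g⁻¹·(ball m) factor through ball n
  have hgate : ∀ y ∈ A, ∀ a ∈ ball S m, ∃ w ∈ ball S n,
      wordDist S y (g⁻¹ * a) = wordDist S y w + wordDist S w (g⁻¹ * a) := by
    intro y hy a ha
    set a' := g⁻¹ * a with ha'def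
    have ha'g : wordDist S a' g⁻¹ = wordLength S a := by
      rw [wordDist]
      have h : a'⁻¹ * g⁻¹ = a⁻¹ := by rw [ha'def]; group
      rw [h, CL.wl_inv hgen]
    have ha'le : wordLength S a' ≤ ℓ + wordLength S a := by
      have := CL.wl_mul_le hgen g⁻¹ a
      rwa [CL.wl_inv hgen] at this
    have haball : wordLength S a ≤ m := ha
    -- Step 1 : G2(x₁, a') ≤ 2n - 2c₀ + 2(6δ+2)
    have h4a := CL.four_point hgen hδ hhyp x₁ a' g⁻¹
    rw [CL.wl_inv hgen, hdxg, ha'g] at h4a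
    have hd0 : X ≤ wordLength S a' + wordDist S x₁ a' := by
      have h := CL.wl_le_add hgen x₁ a'
      rw [CL.dist_symm hgen a' x₁] at h
      omega
    have step1 : (X : ℝ) + (wordLength S a' : ℝ) - (wordDist S x₁ a' : ℝ)
        ≤ 2 * (n : ℝ) - 2 * (c₀ : ℝ) + 2 * (6 * δ + 2) := by
      rcases min_le_iff.mp h4a with h | h
      · -- close case : the product is at most 2ℓ + 6δ+2
        have h1 : (X : ℝ) ≤ (ℓ : ℝ) + (W : ℝ) := by exact_mod_cast hXle
        have h2 : (ℓ : ℝ) + (c₀ : ℝ) < (n : ℝ) := by exact_mod_cast hnl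
        linarith
      · -- a' is short : |a'| ≤ n - c₀ + 6δ+2
        have h1 : (wordLength S a' : ℝ) ≤ (wordLength S a : ℝ) + (X : ℝ) - (W : ℝ)
            + (6 * δ + 2) := by linarith
        have h2 : (wordLength S a : ℝ) ≤ (m : ℝ) := by exact_mod_cast haball
        have h3 : (X : ℝ) ≤ (wordLength S a' : ℝ) + (wordDist S x₁ a' : ℝ) := by
          exact_mod_cast hd0
        linarith
    -- Step 2 : G2(y, a') ≤ 2n - 2c₀ + 3(6δ+2)
    have h4b := CL.four_point hgen hδ hhyp x₁ y a'
    have step2 : (wordLength S y : ℝ) + (wordLength S a' : ℝ)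
        - (wordDist S y a' : ℝ) ≤ 2 * (n : ℝ) - 2 * (c₀ : ℝ) + 3 * (6 * δ + 2) := by
      rcases min_le_iff.mp h4b with h | h
      · exfalso
        have := hG2 y hy
        linarith
      · linarith
    -- Step 3 : a geodesic from y to a' dips into the ball of radius n
    obtain ⟨P, hP, hP0, hPe⟩ := CL.geodesic_exists hgen y a'
    obtain ⟨i, hiL, hi⟩ := CL.switch_lemma hgen hδ hhyp rfl hP hP0 hPe
    refine ⟨P i, ?_, ?_⟩
    · show wordLength S (P i) ≤ n
      have : (wordLength S (P i) : ℝ) ≤ (n : ℝ) := by linarith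
      exact_mod_cast this
    · have h1 := hP 0 i (Nat.zero_le _) hiL
      have h2 := hP i (wordDist S y a') hiL le_rfl
      rw [hP0] at h1
      rw [hPe] at h2
      omega
  -- the containment gA ⊆ A'
  have hsub : (g * ·) '' A ⊆ atomOf S m (g * x₁) := by
    rintro _ ⟨x, hx, rfl⟩
    show SameAtom S m (g * x₁) (g * x)
    have hCb : ∀ w ∈ ball S n, (wordDist S x w : ℤ) - (wordDist S x₁ w : ℤ)
        = (wordDist S x 1 : ℤ) - (wordDist S x₁ 1 : ℤ) := by
      intro w hw
      have := hsame x hx w hw 1 (CL.one_mem_ball n)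
      linarith
    have key : ∀ c ∈ ball S m, (wordDist S (g * x) c : ℤ) - (wordDist S (g * x₁) c : ℤ)
        = (wordDist S x 1 : ℤ) - (wordDist S x₁ 1 : ℤ) := by
      intro c hc
      obtain ⟨w₁, hw₁b, hw₁⟩ := hgate x hx c hc
      obtain ⟨w₀, hw₀b, hw₀⟩ := hgate x₁ hx₁A c hc
      have e1 : wordDist S (g * x) c = wordDist S x (g⁻¹ * c) := by
        rw [wordDist, wordDist]
        congr 1
        group
      have e2 : wordDist S (g * x₁) c = wordDist S x₁ (g⁻¹ * c) := by
        rw [wordDist, wordDist]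
        congr 1
        group
      have t1 := CL.dist_triangle hgen x w₀ (g⁻¹ * c)
      have t2 := CL.dist_triangle hgen x₁ w₁ (g⁻¹ * c)
      have c1 := hCb w₁ hw₁b
      have c2 := hCb w₀ hw₀b
      rw [e1, e2]
      omega
    intro a ha b hb
    have k1 := key a ha
    have k2 := key b hb
    linarith
  have hmemA' : g * x₁ ∈ atomOf S m (g * x₁) := CL.sameAtom_refl m (g * x₁)
  refine ⟨m, atomOf S m (g * x₁), ⟨⟨g * x₁, rfl⟩, ?_⟩, hsub, ?_⟩
  · exact Set.Infinite.mono hsub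
      (hAinf.image (fun a _ b _ h => by simpa using h))
  · intro p hp
    obtain ⟨hpb, hpmin⟩ := hp
    have hpball : wordLength S p ≤ m := hpb
    have hmW : m ≤ W := by
      have h1 : (n : ℤ) ≤ (X : ℤ) := by exact_mod_cast hnX
      omega
    obtain ⟨w', hw'n, hw'd⟩ := CL.exists_nearest hgen (x := g * x₁) hmW
    have hdple : wordDist S (g * x₁) p ≤ wordDist S (g * x₁) w' :=
      hpmin (g * x₁) hmemA' w' (le_of_eq hw'n)
    have hdpge := CL.dist_ball_ge hgen (x := g * x₁) hpb
    have hdp : wordDist S (g * x₁) p + m = W := by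
      omega
    have hpm : wordLength S p = m := by
      have h := CL.wl_le_add hgen (g * x₁) p
      rw [CL.dist_symm hgen p (g * x₁)] at h
      omega
    -- build the side P : a geodesic from 1 to g·x₁ through p
    obtain ⟨β₁, hβ₁, hβ₁0, hβ₁e⟩ := CL.geodesic_exists hgen 1 p
    have hL1 : wordDist S 1 p = m := by rw [CL.dist_one_left]; exact hpm
    rw [hL1] at hβ₁ hβ₁e
    obtain ⟨β₂, hβ₂, hβ₂0, hβ₂e⟩ := CL.geodesic_exists hgen p (g * x₁)
    set L₂ := wordDist S p (g * x₁) with hL₂def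
    have hL₂ : L₂ + m = W := by
      rw [hL₂def, CL.dist_symm hgen]
      exact hdp
    have hPconc := CL.geodesic_concat hgen hβ₁ hβ₂ (by rw [hβ₁e, hβ₂0])
      (by rw [hβ₁0, hβ₂e, CL.dist_one_left, ← hW]; omega)
    set P : ℕ → G := fun i => if i ≤ m then β₁ i else β₂ (i - m) with hPdef
    have hPm : P m = p := by
      show (if m ≤ m then β₁ m else β₂ (m - m)) = p
      rw [if_pos le_rfl]
      exact hβ₁e
    have hP0 : P 0 = 1 := by
      show (if 0 ≤ m then β₁ 0 else β₂ (0 - m)) = 1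
      rw [if_pos (Nat.zero_le _)]
      exact hβ₁0
    have hPe : P (m + L₂) = g * x₁ := by
      by_cases h : m + L₂ ≤ m
      · have hL0 : L₂ = 0 := by omega
        show (if m + L₂ ≤ m then β₁ (m + L₂) else β₂ (m + L₂ - m)) = g * x₁
        rw [if_pos h]
        have : m + L₂ = m := by omega
        rw [this, hβ₁e, ← hβ₂0]
        rw [hL0] at hβ₂e
        exact hβ₂e
      · show (if m + L₂ ≤ m then β₁ (m + L₂) else β₂ (m + L₂ - m)) = g * x₁
        rw [if_neg h]
        have : m + L₂ - m = L₂ := by omega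
        rw [this, hβ₂e]
    -- the side Q' : a geodesic from g·x₁ to g (the reversed translate of α)
    set Q' : ℕ → G := fun j => (fun i => g * α i) (Lα - j) with hQ'def
    have hQ'g : IsGeodesicSeg S Q' Lα := CL.geodesic_reverse hgen (CL.geodesic_translate g hα)
    have hQ'0 : Q' 0 = g * x₁ := by
      show g * α (Lα - 0) = g * x₁
      rw [Nat.sub_zero, hαe]
    have hQ'e : Q' Lα = g := by
      show g * α (Lα - Lα) = g
      rw [Nat.sub_self, hα0, mul_one]
    -- the side R : a geodesic from g to 1
    obtain ⟨R, hR, hR0, hRe⟩ := CL.geodesic_exists hgen g 1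
    set Lr := wordDist S g 1 with hLrdef
    have hLr : Lr = ℓ := by
      rw [hLrdef, wordDist, mul_one, CL.wl_inv hgen]
    have hslim := hhyp P Q' R (m + L₂) Lα Lr hPconc hQ'g hR
      (by rw [hPe, hQ'0]) (by rw [hQ'e, hR0]) (by rw [hRe, hP0])
    obtain ⟨j, hj⟩ := hslim m (by omega)
    -- the point P m = p is close to the Q' side
    have hmbig : (ℓ : ℝ) + δ < (m : ℝ) := by
      have h1 : (X : ℝ) ≤ (ℓ : ℝ) + (W : ℝ) := by exact_mod_cast hXle
      linarith
    have hQcase : j ≤ Lα ∧ (wordDist S (P m) (Q' j) : ℝ) ≤ δ := by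
      rcases hj with h | ⟨hjr, hdr⟩
      · exact h
      · exfalso
        have hRj : wordLength S (R j) + j = Lr := by
          have h := hR j Lr hjr le_rfl
          rw [hRe] at h
          have h2 : wordLength S (R j) = wordDist S (R j) 1 := by
            rw [CL.dist_symm hgen, CL.dist_one_left]
          omega
        have h1 : wordLength S p ≤ wordLength S (R j) + wordDist S (R j) p :=
          CL.wl_le_add hgen p (R j)
        have h2 : (wordDist S (R j) p : ℝ) ≤ δ := by
          rw [CL.dist_symm hgen, ← hPm]
          exact hdr
        have h3 : (wordLength S p : ℝ) ≤ (wordLength S (R j) : ℝ)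
            + (wordDist S (R j) p : ℝ) := by exact_mod_cast h1
        have h4 : (wordLength S (R j) : ℝ) ≤ (ℓ : ℝ) := by
          have : wordLength S (R j) ≤ ℓ := by omega
          exact_mod_cast this
        rw [hpm] at h3
        linarith
    obtain ⟨hjq, hdq⟩ := hQcase
    rw [hPm] at hdq
    set s := Lα - j with hsdef
    have hQj : Q' j = g * α s := rfl
    rw [hQj] at hdq
    -- |d(gx₁, p) - j| ≤ δ
    have hd1 : wordDist S (g * x₁) (Q' j) = j := by
      have := hQ'g 0 j (Nat.zero_le _) hjq
      rw [hQ'0] at this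
      omega
    rw [hQj] at hd1
    have htr1 := CL.dist_triangle hgen (g * x₁) (g * α s) p
    have htr2 := CL.dist_triangle hgen (g * x₁) p (g * α s)
    have hsymm : wordDist S (g * α s) p = wordDist S p (g * α s) :=
      CL.dist_symm hgen _ _
    have hjR : ((wordDist S (g * x₁) p : ℝ)) - δ ≤ (j : ℝ) ∧
        (j : ℝ) ≤ ((wordDist S (g * x₁) p : ℝ)) + δ := by
      constructor
      · have hc := (Nat.cast_le (α := ℝ)).mpr htr1
        push_cast [hd1] at hc
        rw [hsymm] at hc
        linarith
      · have hc := (Nat.cast_le (α := ℝ)).mpr htr2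
        push_cast [hd1] at hc
        linarith
    have hdpR : (wordDist S (g * x₁) p : ℝ) = (W : ℝ) - (m : ℝ) := by
      have := congrArg (Nat.cast (R := ℝ)) hdp
      push_cast at this
      linarith
    have hsR : (s : ℝ) = (X : ℝ) - (j : ℝ) := by
      have h1 : s + j = Lα := by omega
      have := congrArg (Nat.cast (R := ℝ)) h1
      push_cast at this
      rw [hLα] at h1
      have := congrArg (Nat.cast (R := ℝ)) h1
      push_cast at this
      linarith
    -- s is between n - c₀ - δ and n - c₀ + δ, in particular s ≤ n
    have hsbounds : (n : ℝ) - (c₀ : ℝ) - δ ≤ (s : ℝ) ∧ (s : ℝ) ≤ (n : ℝ) - (c₀ : ℝ) + δ := by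
      constructor
      · rw [hsR]
        have := hjR.2
        rw [hdpR] at this
        linarith
      · rw [hsR]
        have := hjR.1
        rw [hdpR] at this
        linarith
    have hsn : s ≤ n := by
      have : (s : ℝ) ≤ (n : ℝ) := by
        have := hsbounds.2
        linarith
      exact_mod_cast this
    have hsLα : s ≤ Lα := by omega
    have hnLα : n ≤ Lα := by omega
    -- d(α s, α n) = n - s
    have hdss : wordDist S (α s) (α n) = n - s := hα s n hsn hnLα
    have hfinal : (wordDist S p (g * q) : ℝ) ≤ 18 * δ + 6 := by
      have htr := CL.dist_triangle hgen p (g * α s) (g * α n)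
      have hli : wordDist S (g * α s) (g * α n) = n - s := by
        rw [CL.dist_left_inv]
        exact hdss
      have hc := (Nat.cast_le (α := ℝ)).mpr htr
      push_cast [hli] at hc
      have hns : ((n - s : ℕ) : ℝ) = (n : ℝ) - (s : ℝ) := by
        push_cast [Nat.cast_sub hsn]
        ring
      have h1 := hsbounds.1
      rw [← hqdef] at hc
      have : (wordDist S p (g * q) : ℝ) ≤ δ + ((n : ℝ) - (s : ℝ)) := by
        rw [hns] at hc
        linarith
      linarith
    exact ⟨q, hqnear, hfinal⟩

end
end

section
/- Let G be an infinite hyperbolic group with a fixed finite generating set whose Cayley graph is δ-hyperbolic, with word metric d and |g| = d(1,g). Let p ∈ B_n and let S ⊆ G ∖ B_n satisfy diam(S) < 2n − 2|p| − 4δ. Then ‖d̄_p − d̄_1‖_S ≤ 6δ + 2; equivalently, |(d(x,p) − |x|) − (d(y,p) − |y|)| ≤ 12δ + 4 for all x, y ∈ S. -/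
open scoped Classical

noncomputable section

/-! Put `P = d(x,y) + d(x,p) − d(p,y)` (twice the Gromov product `(y|p)_x`). If `P` is small the
bound is the triangle inequality. Otherwise let `m` be the point at distance `k ≈ P/2 − δ` from `x`
on a geodesic `[x,p]`. Since `2k + 2δ < P`, thinness of the triangle `x p y` puts `m` within `δ` of
a point `w` of `[y,x]`; since `|x|, |y| > n` and `d(x,y) < 2n − 2|p| − 4δ`, `w` is too far from `1`
for `m` to be near `[p,1]`, so thinness of `x p 1` puts `m` within `δ` of a point `u` of `[1,x]`.
Comparing `|x|` and `|y|` through `u`, `m` and `w` gives the estimate. All distances are integers,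
so `δ` may be replaced by `⌊δ⌋₊` and the argument is carried out in `ℕ`. -/

section WordMetric

variable {G : Type} [Group G] {S : Set G}

def IsWord (S : Set G) (l : List G) : Prop :=
  ∀ x ∈ l, x ∈ S ∨ x⁻¹ ∈ S

lemma IsWord.append {l₁ l₂ : List G} (h₁ : IsWord S l₁) (h₂ : IsWord S l₂) :
    IsWord S (l₁ ++ l₂) := by
  intro x hx
  rcases List.mem_append.1 hx with hx | hx
  exacts [h₁ x hx, h₂ x hx]

lemma IsWord.reverse_map_inv {l : List G} (hl : IsWord S l) :
    IsWord S (l.map fun x => x⁻¹).reverse := by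
  intro x hx
  obtain ⟨y, hy, rfl⟩ := List.mem_map.1 (List.mem_reverse.1 hx)
  rw [inv_inv]
  exact (hl y hy).symm

lemma IsWord.take {l : List G} (hl : IsWord S l) (i : ℕ) : IsWord S (l.take i) :=
  fun x hx => hl x (List.take_subset _ _ hx)

lemma IsWord.drop {l : List G} (hl : IsWord S l) (i : ℕ) : IsWord S (l.drop i) :=
  fun x hx => hl x (List.drop_subset _ _ hx)

lemma wordLength_prod_le {l : List G} (hl : IsWord S l) : wordLength S l.prod ≤ l.length :=
  Nat.sInf_le ⟨l, rfl, hl, rfl⟩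

lemma exists_isWord_length_eq_wordLength (hgen : Subgroup.closure S = ⊤) (g : G) :
    ∃ l : List G, IsWord S l ∧ l.length = wordLength S g ∧ l.prod = g := by
  have hg : g ∈ Submonoid.closure (S ∪ S⁻¹) := by
    rw [← Subgroup.closure_toSubmonoid, hgen]
    trivial
  obtain ⟨l, hl, hprod⟩ := Submonoid.exists_list_of_mem_closure hg
  have hne : {n | ∃ l : List G, l.length = n ∧ IsWord S l ∧ l.prod = g}.Nonempty :=
    ⟨l.length, l, rfl, fun x hx => hl x hx, hprod⟩
  obtain ⟨l, hlen, hword, hprod⟩ := Nat.sInf_mem hne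
  exact ⟨l, hword, hlen, hprod⟩

lemma wordLength_mul_le (hgen : Subgroup.closure S = ⊤) (g h : G) :
    wordLength S (g * h) ≤ wordLength S g + wordLength S h := by
  obtain ⟨l₁, hw₁, hlen₁, rfl⟩ := exists_isWord_length_eq_wordLength hgen g
  obtain ⟨l₂, hw₂, hlen₂, rfl⟩ := exists_isWord_length_eq_wordLength hgen h
  simpa [List.prod_append, hlen₁, hlen₂] using wordLength_prod_le (hw₁.append hw₂)

lemma wordLength_inv_le (hgen : Subgroup.closure S = ⊤) (g : G) :
    wordLength S g⁻¹ ≤ wordLength S g := by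
  obtain ⟨l, hw, hlen, rfl⟩ := exists_isWord_length_eq_wordLength hgen g
  simpa [List.prod_inv_reverse, hlen] using wordLength_prod_le hw.reverse_map_inv

lemma wordLength_inv (hgen : Subgroup.closure S = ⊤) (g : G) :
    wordLength S g⁻¹ = wordLength S g :=
  le_antisymm (wordLength_inv_le hgen g) (by simpa using wordLength_inv_le hgen g⁻¹)

lemma wordDist_comm (hgen : Subgroup.closure S = ⊤) (x y : G) :
    wordDist S x y = wordDist S y x := by
  rw [wordDist, wordDist, ← wordLength_inv hgen, mul_inv_rev, inv_inv]

lemma wordDist_triangle (hgen : Subgroup.closure S = ⊤) (x y z : G) :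
    wordDist S x z ≤ wordDist S x y + wordDist S y z := by
  rw [wordDist, show x⁻¹ * z = (x⁻¹ * y) * (y⁻¹ * z) by group]
  exact wordLength_mul_le hgen _ _

lemma wordDist_one_left (g : G) : wordDist S 1 g = wordLength S g := by
  simp [wordDist]

lemma wordDist_mul_prod_take_le {l : List G} (hl : IsWord S l) (a : G) {i j : ℕ}
    (hij : i ≤ j) : wordDist S (a * (l.take i).prod) (a * (l.take j).prod) ≤ j - i := by
  have hsplit : l.take i ++ (l.take j).drop i = l.take j := by
    conv_rhs => rw [← List.take_append_drop i (l.take j)]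
    rw [List.take_take, min_eq_left hij]
  have hprod : (a * (l.take i).prod)⁻¹ * (a * (l.take j).prod) = ((l.take j).drop i).prod := by
    rw [← congrArg List.prod hsplit, List.prod_append]
    group
  rw [wordDist, hprod]
  refine (wordLength_prod_le ((hl.take j).drop i)).trans ?_
  simp only [List.length_drop, List.length_take]
  omega

/-- The prefixes of a word of minimal length for `a⁻¹ * b` trace a geodesic from `a` to `b`. -/
lemma exists_isGeodesicSeg (hgen : Subgroup.closure S = ⊤) (a b : G) :
    ∃ γ : ℕ → G, IsGeodesicSeg S γ (wordDist S a b) ∧ γ 0 = a ∧ γ (wordDist S a b) = b := by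
  obtain ⟨l, hl, hlen, hprod⟩ := exists_isWord_length_eq_wordLength hgen (a⁻¹ * b)
  set γ : ℕ → G := fun i => a * (l.take i).prod
  have hN : wordDist S a b = l.length := hlen.symm
  have hγ0 : γ 0 = a := by simp [γ]
  have hγN : γ (wordDist S a b) = b := by simp [γ, hN, hprod]
  have hend : wordDist S (γ 0) (γ (wordDist S a b)) = wordDist S a b := by rw [hγ0, hγN]
  refine ⟨γ, fun i j hij hjN => le_antisymm (wordDist_mul_prod_take_le hl a hij) ?_, hγ0, hγN⟩
  have h₁ : wordDist S (γ 0) (γ i) ≤ i - 0 := wordDist_mul_prod_take_le hl a (Nat.zero_le i)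
  have h₂ : wordDist S (γ j) (γ (wordDist S a b)) ≤ wordDist S a b - j :=
    wordDist_mul_prod_take_le hl a hjN
  have := wordDist_triangle hgen (γ 0) (γ i) (γ (wordDist S a b))
  have := wordDist_triangle hgen (γ i) (γ j) (γ (wordDist S a b))
  omega

def WordBtw (S : Set G) (x y z : G) : Prop :=
  wordDist S x y + wordDist S y z = wordDist S x z

lemma IsGeodesicSeg.wordBtw {γ : ℕ → G} {N i : ℕ} (hγ : IsGeodesicSeg S γ N) (hi : i ≤ N) :
    WordBtw S (γ 0) (γ i) (γ N) := by
  have h₁ := hγ 0 i (Nat.zero_le i) hi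
  have h₂ := hγ i N hi le_rfl
  have h₃ := hγ 0 N (Nat.zero_le N) le_rfl
  rw [WordBtw]
  omega

lemma SlimTriangles.exists_wordBtw_near (hgen : Subgroup.closure S = ⊤) {δ : ℝ}
    (hhyp : SlimTriangles S δ) {α : ℕ → G} {x p : G} (hα : IsGeodesicSeg S α (wordDist S x p))
    (hα0 : α 0 = x) (hαN : α (wordDist S x p) = p) {i : ℕ} (hi : i ≤ wordDist S x p) (y : G) :
    ∃ w, (wordDist S (α i) w : ℝ) ≤ δ ∧ (WordBtw S p w y ∨ WordBtw S y w x) := by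
  obtain ⟨β, hβ, hβ0, hβN⟩ := exists_isGeodesicSeg hgen p y
  obtain ⟨σ, hσ, hσ0, hσN⟩ := exists_isGeodesicSeg hgen y x
  obtain ⟨j, ⟨hj, hd⟩ | ⟨hj, hd⟩⟩ := hhyp α β σ _ _ _ hα hβ hσ (hαN.trans hβ0.symm)
    (hβN.trans hσ0.symm) (hσN.trans hα0.symm) i hi
  · exact ⟨β j, hd, Or.inl (hβ0 ▸ hβN ▸ hβ.wordBtw hj)⟩
  · exact ⟨σ j, hd, Or.inr (hσ0 ▸ hσN ▸ hσ.wordBtw hj)⟩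

lemma SlimTriangles.natFloor {δ : ℝ} (hhyp : SlimTriangles S δ) : SlimTriangles S ⌊δ⌋₊ := by
  intro p q r np nq nr hp hq hr hpq hqr hrp i hi
  obtain ⟨j, h | h⟩ := hhyp p q r np nq nr hp hq hr hpq hqr hrp i hi
  · exact ⟨j, Or.inl ⟨h.1, by exact_mod_cast Nat.le_floor h.2⟩⟩
  · exact ⟨j, Or.inr ⟨h.1, by exact_mod_cast Nat.le_floor h.2⟩⟩

lemma wordDist_add_wordLength_le (hgen : Subgroup.closure S = ⊤) {δ : ℕ}
    (hhyp : SlimTriangles S δ) {n : ℕ} {p x y : G} (hx : n < wordLength S x)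
    (hy : n < wordLength S y) (hxy : wordDist S x y + 2 * wordLength S p + 4 * δ < 2 * n) :
    wordDist S x p + wordLength S y ≤ wordDist S y p + wordLength S x + 6 * δ + 2 := by
  have tri := wordDist_triangle hgen
  have comm := wordDist_comm hgen
  have len : ∀ g, wordDist S 1 g = wordLength S g := wordDist_one_left
  have := tri 1 x y; have := tri x p y; have := len x; have := len y; have := comm y p
  obtain ⟨P, hP⟩ : ∃ P, P = wordDist S x y + wordDist S x p - wordDist S p y := ⟨_, rfl⟩
  by_cases hsmall : P ≤ 2 * δ
  · omega
  obtain ⟨α, hα, hα0, hαN⟩ := exists_isGeodesicSeg hgen x p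
  obtain ⟨k, hk⟩ : ∃ k, k = (P - 2 * δ - 1) / 2 := ⟨_, rfl⟩
  have hkN : k ≤ wordDist S x p := by omega
  have hm := hα.wordBtw hkN
  rw [hα0, hαN, WordBtw] at hm
  set m := α k
  have hxm : wordDist S x m = k := by simpa [hα0] using hα 0 k (Nat.zero_le k) hkN
  obtain ⟨w, hmw, hw⟩ := hhyp.exists_wordBtw_near hgen hα hα0 hαN hkN y
  replace hmw : wordDist S m w ≤ δ := by exact_mod_cast hmw
  rcases hw with hw | hw <;> rw [WordBtw] at hw
  · -- `P ≤ 2k + 2δ`, against the choice of `k`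
    have := tri x m y; have := tri m w y; have := tri m w p; have := comm w p
    omega
  obtain ⟨u, hmu, hu⟩ := hhyp.exists_wordBtw_near hgen hα hα0 hαN hkN 1
  replace hmu : wordDist S m u ≤ δ := by exact_mod_cast hmu
  have := comm x y; have := comm w y; have := comm m u
  rcases hu with hu | hu <;> rw [WordBtw] at hu
  · -- `|x| + |y| ≤ 2|w| + d(x,y)` and `|w| ≤ |p| + 2δ` contradict `hxy`
    have := tri 1 w x; have := tri 1 w y; have := tri 1 u w; have := tri u m w
    have := comm 1 u; have := comm p 1; have := len p
    omega
  · have := tri 1 u y; have := tri u m y; have := tri m w y; have := tri x u m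
    have := tri x w m; have := comm x u; have := comm x w; have := comm w m
    have := len u
    omega

end WordMetric

theorem distance_function_not_changing_general (G : Type) [Group G]
    (S : Set G) (hgen : Subgroup.closure S = ⊤)
    (δ : ℝ) (hδ : 0 < δ) (hhyp : SlimTriangles S δ)
    (n : ℕ) (p : G)
    (T : Set G) (hT : ∀ x ∈ T, x ∉ ball S n)
    (hdiam : ∀ x ∈ T, ∀ y ∈ T,
      (wordDist S x y : ℝ) < 2 * n - 2 * (wordLength S p : ℝ) - 4 * δ) :
    ∀ x ∈ T, ∀ y ∈ T,
      |((wordDist S x p : ℝ) - (wordLength S x : ℝ)) -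
        ((wordDist S y p : ℝ) - (wordLength S y : ℝ))| ≤ 12 * δ + 4 := by
  have hfloor : (⌊δ⌋₊ : ℝ) ≤ δ := Nat.floor_le hδ.le
  have key : ∀ x ∈ T, ∀ y ∈ T, (wordDist S x p : ℝ) + wordLength S y ≤
      wordDist S y p + wordLength S x + 6 * δ + 2 := by
    intro x hx y hy
    have hxy : wordDist S x y + 2 * wordLength S p + 4 * ⌊δ⌋₊ < 2 * n := by
      exact_mod_cast (show (wordDist S x y : ℝ) + 2 * wordLength S p + 4 * ⌊δ⌋₊ < 2 * n by
        linarith [hdiam x hx y hy])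
    have := wordDist_add_wordLength_le hgen hhyp.natFloor (not_le.1 (hT x hx))
      (not_le.1 (hT y hy)) hxy
    have : (wordDist S x p : ℝ) + wordLength S y ≤
        wordDist S y p + wordLength S x + 6 * ⌊δ⌋₊ + 2 := by exact_mod_cast this
    linarith
  intro x hx y hy
  rw [abs_le]
  constructor <;> linarith [key x hx y hy, key y hy x hx]

/-- Let `G` be an infinite hyperbolic group whose Cayley graph (for the fixed finite
generating set `S`) is `δ`-hyperbolic.  If `p ∈ B_n` and `T ⊆ G ∖ B_n` has diameter
less than `2n − 2|p| − 4δ`, then `‖d̄_p − d̄_1‖_T ≤ 6δ + 2`, i.e.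
`|(d(x,p) − |x|) − (d(y,p) − |y|)| ≤ 12δ + 4` for all `x, y ∈ T`. -/
theorem distance_function_not_changing (G : Type) [Group G] [Infinite G]
    (S : Set G) (hSfin : S.Finite) (hgen : Subgroup.closure S = ⊤)
    (δ : ℝ) (hδ : 0 < δ) (hhyp : SlimTriangles S δ)
    (n : ℕ) (p : G) (hp : p ∈ ball S n)
    (T : Set G) (hT : ∀ x ∈ T, x ∉ ball S n)
    (hdiam : ∀ x ∈ T, ∀ y ∈ T,
      (wordDist S x y : ℝ) < 2 * n - 2 * (wordLength S p : ℝ) - 4 * δ) :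
    ∀ x ∈ T, ∀ y ∈ T,
      |((wordDist S x p : ℝ) - (wordLength S x : ℝ)) -
        ((wordDist S y p : ℝ) - (wordLength S y : ℝ))| ≤ 12 * δ + 4 :=
  distance_function_not_changing_general G S hgen δ hδ hhyp n p T hT hdiam

end
end

section
/- Let Σ_Γ be a subshift of finite type without isolated points or empty cones and let f : E → Σ_Γ be a nondegenerate map. Then for every finite directed path β, the set {α : C_α ⊆ E and f̄(α) = β} is finite. If moreover f is rational and injective with exactly k distinct local actions, then this set has at most k elements. -/
open scoped Classical

noncomputable section

/-- A finite directed graph (loops and parallel edges are allowed). -/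
structure FinDigraph : Type 1 where
  V : Type
  E : Type
  [fintypeV : Fintype V]
  [fintypeE : Fintype E]
  o : E → V
  t : E → V

attribute [instance] FinDigraph.fintypeV FinDigraph.fintypeE

instance (Γ : FinDigraph) : TopologicalSpace Γ.E := ⊥
instance (Γ : FinDigraph) : DiscreteTopology Γ.E := ⟨rfl⟩

namespace FinDigraph

variable (Γ : FinDigraph)

/-- The subshift of finite type `Σ_Γ`: the set of all infinite directed paths in `Γ`,
viewed as a subset of the product space of all edge sequences (each edge's terminus is
the origin of the next edge). -/
def shift : Set (ℕ → Γ.E) := {x | ∀ i, Γ.t (x i) = Γ.o (x (i + 1))}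

/-- Validity of a finite directed path starting at a given node. -/
def pathOk : Γ.V → List Γ.E → Prop
  | _, [] => True
  | v, e :: l => Γ.o e = v ∧ pathOk (Γ.t e) l

/-- A finite directed path in `Γ` (a node together with a compatible list of edges;
a path with no edges is a node, regarded as a path of length `0`). -/
structure FinPath where
  start : Γ.V
  edges : List Γ.E
  ok : Γ.pathOk start edges

/-- Terminus of a list of edges starting at a given node. -/
def pathEndAux : Γ.V → List Γ.E → Γ.V
  | v, [] => v
  | _, e :: l => pathEndAux (Γ.t e) l

/-- The terminus `t(α)` of a finite directed path. -/
def pathEnd (α : Γ.FinPath) : Γ.V := Γ.pathEndAux α.start α.edges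

/-- The length-0 path at a node `v`. -/
def trivPath (v : Γ.V) : Γ.FinPath := ⟨v, [], by simp [pathOk]⟩

/-- The cone `C_α ⊆ Σ_Γ` of all infinite directed paths having `α` as a prefix. -/
def cone (α : Γ.FinPath) : Set (ℕ → Γ.E) :=
  {x | x ∈ Γ.shift ∧ Γ.o (x 0) = α.start ∧
    ∀ (i : ℕ) (h : i < α.edges.length), x i = α.edges.get ⟨i, h⟩}

/-- The canonical similarity `C_α → C_β` (for `t(α) = t(β)`) on the level of edge
sequences: delete the prefix `α` and attach the prefix `β`. -/
def splice (α β : Γ.FinPath) (x : ℕ → Γ.E) : ℕ → Γ.E := fun i =>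
  if h : i < β.edges.length then β.edges.get ⟨i, h⟩
  else x (i - β.edges.length + α.edges.length)

/-- Concatenation `α · ω` of a finite path with an infinite path (on sequences). -/
def catPath (α : Γ.FinPath) (x : ℕ → Γ.E) : ℕ → Γ.E :=
  Γ.splice (Γ.trivPath (Γ.pathEnd α)) α x

/-- The length of the path `f̄(α)`, i.e. of the greatest common prefix of all points
of `f(C_α)`. -/
def barLen (f : (ℕ → Γ.E) → ℕ → Γ.E) (α : Γ.FinPath) : ℕ :=
  sSup {n | ∀ x ∈ Γ.cone α, ∀ y ∈ Γ.cone α, ∀ i < n, f x i = f y i}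

/-- The local action `f|_α : C_{t(α)} → C_{t(f̄(α))}`, determined by
`f(α·ω) = f̄(α)·(f|_α)(ω)`.  It is recorded together with the node `t(α)`
(the node of its domain cone), and is extended by the identity off the cone
`C_{t(α)}`. -/
def localAction (f : (ℕ → Γ.E) → ℕ → Γ.E) (α : Γ.FinPath) :
    Γ.V × ((ℕ → Γ.E) → ℕ → Γ.E) :=
  (Γ.pathEnd α, fun w =>
    if w ∈ Γ.cone (Γ.trivPath (Γ.pathEnd α)) then
      fun i => f (Γ.catPath α w) (i + Γ.barLen f α)
    else w)

/-- A map is rational (on a domain `D`) if it has only finitely many distinct local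
actions at cones contained in `D`. -/
def RationalOn (f : (ℕ → Γ.E) → ℕ → Γ.E) (D : Set (ℕ → Γ.E)) : Prop :=
  (Γ.localAction f '' {α : Γ.FinPath | Γ.cone α ⊆ D}).Finite

/-- The nucleus `𝒩_f` of a map: the set of local actions `f|_α` that occur for
infinitely many finite paths `α` with `C_α` contained in the domain. -/
def nucleusOf (f : (ℕ → Γ.E) → ℕ → Γ.E) (D : Set (ℕ → Γ.E)) :
    Set (Γ.V × ((ℕ → Γ.E) → ℕ → Γ.E)) :=
  {p | {α : Γ.FinPath | Γ.cone α ⊆ D ∧ Γ.localAction f α = p}.Infinite}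

/-- A nondegenerate map on `Σ_Γ` with domain `D`: it takes values in `Σ_Γ` and maps no
cone contained in `D` to a single point. -/
def Nondegenerate (f : (ℕ → Γ.E) → ℕ → Γ.E) (D : Set (ℕ → Γ.E)) : Prop :=
  (∀ x ∈ D, f x ∈ Γ.shift) ∧
  ∀ α : Γ.FinPath, Γ.cone α ⊆ D → ¬∃ p, ∀ x ∈ Γ.cone α, f x = p

/-- Extension of a map `E → E'` between subsets of the sequence space to a globally
defined map (by the identity off `E`). -/
def homExt (E E' : Set (ℕ → Γ.E)) (f : ↥E → ↥E') : (ℕ → Γ.E) → ℕ → Γ.E :=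
  fun x => if h : x ∈ E then ↑(f ⟨x, h⟩) else x

/-- Extension of a permutation of `E` to a globally defined map. -/
def permExt (E : Set (ℕ → Γ.E)) (g : Equiv.Perm ↥E) : (ℕ → Γ.E) → ℕ → Γ.E :=
  Γ.homExt E E ⇑g

/-- `E` is a clopen subset of the subshift `Σ_Γ`. -/
def ClopenIn (E : Set (ℕ → Γ.E)) : Prop :=
  IsClopen {x : ↥Γ.shift | (x : ℕ → Γ.E) ∈ E}

/-- `U ⊆ Σ_Γ` is open in the subshift. -/
def OpenInShift (U : Set (ℕ → Γ.E)) : Prop :=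
  IsOpen {x : ↥Γ.shift | (x : ℕ → Γ.E) ∈ U}

/-- The subshift `Σ_Γ` has no isolated points. -/
def NoIsolatedPoints : Prop := ∀ x : ↥Γ.shift, ¬IsOpen ({x} : Set ↥Γ.shift)

/-- The subshift `Σ_Γ` has no empty cones. -/
def NoEmptyCones : Prop := ∀ α : Γ.FinPath, (Γ.cone α).Nonempty

/-- A permutation of `E` which is a homeomorphism and is a rational map:
an element of the rational group `R_{Γ,E}`. -/
def IsRatHomeo (E : Set (ℕ → Γ.E)) (g : Equiv.Perm ↥E) : Prop :=
  Continuous ⇑g ∧ Continuous ⇑g.symm ∧ Γ.RationalOn (Γ.permExt E g) E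

/-- `g` maps the cone `C_α` to the cone `C_β` by the canonical similarity
`α·ω ↦ β·ω`. -/
def RealizesCanonSim (E : Set (ℕ → Γ.E)) (g : Equiv.Perm ↥E) (α β : Γ.FinPath) : Prop :=
  ∀ x, ∀ hx : x ∈ E, x ∈ Γ.cone α → ↑(g ⟨x, hx⟩) = Γ.splice α β x

/-- A rational similarity group (RSG): a subgroup of the rational group `R_{Γ,E}` that
realizes the canonical similarity between any two cones `C_α, C_β ⊊ E` with
`t(α) = t(β)`. -/
def IsRSG (E : Set (ℕ → Γ.E)) (G : Subgroup (Equiv.Perm ↥E)) : Prop :=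
  (∀ g ∈ G, Γ.IsRatHomeo E g) ∧
  ∀ α β : Γ.FinPath, Γ.pathEnd α = Γ.pathEnd β → Γ.cone α ⊂ E → Γ.cone β ⊂ E →
    ∃ g ∈ G, Γ.RealizesCanonSim E g α β

/-- `h` locally agrees with the group `G`: every point has an open neighborhood on
which `h` coincides with some element of `G`. -/
def LocallyAgrees (E : Set (ℕ → Γ.E)) (G : Subgroup (Equiv.Perm ↥E))
    (h : Equiv.Perm ↥E) : Prop :=
  ∀ x : ↥E, ∃ U : Set ↥E, IsOpen U ∧ x ∈ U ∧ ∃ g ∈ G, ∀ u ∈ U, h u = g u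

/-- `G` is full as a group of homeomorphisms of `E`: every homeomorphism of `E` that
locally agrees with `G` already belongs to `G`. -/
def IsFullOn (E : Set (ℕ → Γ.E)) (G : Subgroup (Equiv.Perm ↥E)) : Prop :=
  ∀ h : Equiv.Perm ↥E, Continuous ⇑h → Continuous ⇑h.symm →
    Γ.LocallyAgrees E G h → h ∈ G

/-- The nucleus `𝒩_G` of a subgroup `G ≤ R_{Γ,E}`: the union of the nuclei of its
elements. -/
def groupNucleus (E : Set (ℕ → Γ.E)) (G : Subgroup (Equiv.Perm ↥E)) :
    Set (Γ.V × ((ℕ → Γ.E) → ℕ → Γ.E)) :=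
  ⋃ g ∈ G, Γ.nucleusOf (Γ.permExt E g) E

/-- An edge of the induced subgraph on a set `W` of nodes. -/
def InducedEdge (W : Set Γ.V) (e : Γ.E) : Prop := Γ.o e ∈ W ∧ Γ.t e ∈ W

/-- A path of the induced subgraph on `W`. -/
def PathIn (W : Set Γ.V) (α : Γ.FinPath) : Prop :=
  α.start ∈ W ∧ ∀ e ∈ α.edges, Γ.InducedEdge W e

/-- The induced subgraph on `W` is strongly connected and is not a directed cycle,
i.e. `Σ_{Γ₀}` is irreducible (where `Γ₀` is the induced subgraph on `W`). -/
def IrreducibleOn (W : Set Γ.V) : Prop :=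
  (∀ v ∈ W, ∀ w ∈ W, ∃ α : Γ.FinPath,
      α.start = v ∧ Γ.pathEnd α = w ∧ α.edges ≠ [] ∧ Γ.PathIn W α) ∧
  ¬∀ v ∈ W, ∃! e : Γ.E, Γ.InducedEdge W e ∧ Γ.o e = v

/-- `Σ_Γ` has an irreducible core: an induced subgraph `Γ₀` (on a node set `W`) with
`Σ_{Γ₀}` irreducible, such that every node has a directed path to `Γ₀` and every
sufficiently long directed path ends in `Γ₀`. -/
def HasIrreducibleCore : Prop :=
  ∃ W : Set Γ.V, Γ.IrreducibleOn W ∧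
    (∀ v : Γ.V, ∃ α : Γ.FinPath, α.start = v ∧ Γ.pathEnd α ∈ W) ∧
    ∃ N : ℕ, ∀ α : Γ.FinPath, α.edges.length = N → Γ.pathEnd α ∈ W

/-- `G ≤ R_{Γ,E}` is contracting: `Σ_Γ` has an irreducible core and the nucleus `𝒩_G`
is finite. -/
def IsContracting (E : Set (ℕ → Γ.E)) (G : Subgroup (Equiv.Perm ↥E)) : Prop :=
  Γ.HasIrreducibleCore ∧ (Γ.groupNucleus E G).Finite

/-- An element of the Thompson group `V_{Γ,E}`: there are partitions of `E` into cones
`C_{α_1},…,C_{α_k}` and `C_{β_1},…,C_{β_k}` with `t(α_i) = t(β_i)` such that `g` maps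
each `C_{α_i}` to `C_{β_i}` by the canonical similarity. -/
def IsThompson (E : Set (ℕ → Γ.E)) (g : Equiv.Perm ↥E) : Prop :=
  ∃ (k : ℕ) (α β : Fin k → Γ.FinPath),
    (∀ i, Γ.pathEnd (α i) = Γ.pathEnd (β i)) ∧
    E = (⋃ i, Γ.cone (α i)) ∧
    Pairwise (fun i j => Disjoint (Γ.cone (α i)) (Γ.cone (α j))) ∧
    E = (⋃ i, Γ.cone (β i)) ∧
    Pairwise (fun i j => Disjoint (Γ.cone (β i)) (Γ.cone (β j))) ∧
    ∀ i, Γ.RealizesCanonSim E g (α i) (β i)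

/-- A rational (eventually repeating) point `σ·τ^∞` of `Σ_Γ`. -/
def IsRationalPt (x : ℕ → Γ.E) : Prop :=
  ∃ σ τ : Γ.FinPath, τ.edges ≠ [] ∧
    (∀ (i : ℕ) (h : i < σ.edges.length), x i = σ.edges.get ⟨i, h⟩) ∧
    ∀ i : ℕ, σ.edges.length ≤ i →
      ∀ h : (i - σ.edges.length) % τ.edges.length < τ.edges.length,
        x i = τ.edges.get ⟨(i - σ.edges.length) % τ.edges.length, h⟩

/-- `β = f̄(α)`: the cone `C_β` is the smallest cone containing `f(C_α)`, with `β` the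
greatest common prefix of the points of `f(C_α)`. -/
def IsBar (f : (ℕ → Γ.E) → ℕ → Γ.E) (α β : Γ.FinPath) : Prop :=
  f '' Γ.cone α ⊆ Γ.cone β ∧
  ∀ γ : Γ.FinPath, f '' Γ.cone α ⊆ Γ.cone γ →
    Γ.cone β ⊆ Γ.cone γ ∧ γ.edges.length ≤ β.edges.length

end FinDigraph

/-! As `E` is compact and `f` is continuous, the first `|β| + 1` edges of `f x` depend only on
the first `m` edges of `x ∈ E`, for some `m`. A cone `C_α ⊆ E` with `|α| ≥ m` is then mapped into
a cone of length `|β| + 1`, so `f̄(α) = β` forces `|α| < m`, and there are finitely many such `α`.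

If `f̄(α) = f̄(α') = β` and `f|_α = f|_α'`, then `f(α·ω) = β·f|_α(ω) = f(α'·ω)` for all
`ω ∈ C_{t(α)}`, so `α·ω = α'·ω` when `f` is injective. If `|α| < |α'|`, this makes every such `ω`
the same periodic sequence, so `C_{t(α)}` would be an isolated point; hence `α = α'`, i.e.
`α ↦ f|_α` is injective on `{α | f̄(α) = β}`. -/

theorem IsCompact.exists_forall_eq_of_mem_cylinder {α β : Type*} [TopologicalSpace α]
    [DiscreteTopology α] [TopologicalSpace β] [DiscreteTopology β] {K : Set (ℕ → α)}
    (hK : IsCompact K) {g : (ℕ → α) → β} (hg : ContinuousOn g K) :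
    ∃ m, ∀ x ∈ K, ∀ y ∈ K, y ∈ PiNat.cylinder x m → g y = g x := by
  have hloc : ∀ x ∈ K, ∃ n, ∀ y ∈ K, y ∈ PiNat.cylinder x n → g y = g x := by
    intro x hx
    obtain ⟨U, hU, hxU, hUg⟩ :=
      mem_nhdsWithin.1 (hg x hx ((isOpen_discrete {g x}).mem_nhds rfl))
    obtain ⟨_, ⟨z, n, rfl⟩, hxz, hzU⟩ :=
      (PiNat.isTopologicalBasis_cylinders _).exists_subset_of_mem_open hxU hU
    refine ⟨n, fun y hy hyx => hUg ⟨hzU ?_, hy⟩⟩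
    rwa [← PiNat.mem_cylinder_iff_eq.1 hxz]
  choose! M hM using hloc
  obtain ⟨t, htK, hKt⟩ := hK.elim_nhds_subcover (fun x => PiNat.cylinder x (M x))
    fun x _ => (PiNat.isOpen_cylinder _ x _).mem_nhds (PiNat.self_mem_cylinder x _)
  refine ⟨t.sup M, fun x hx y hy hyx => ?_⟩
  obtain ⟨z, hzt, hxz⟩ := Set.mem_iUnion₂.1 (hKt hx)
  have hyz : y ∈ PiNat.cylinder z (M z) := by
    rw [← PiNat.mem_cylinder_iff_eq.1 hxz]
    exact PiNat.cylinder_anti x (Finset.le_sup hzt) hyx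
  rw [hM z (htK z hzt) y hy hyz, hM z (htK z hzt) x hx hxz]

namespace FinDigraph

variable {Γ : FinDigraph}

theorem isClosed_shift (Γ : FinDigraph) : IsClosed Γ.shift := by
  have : Γ.shift = ⋂ i, (fun x : ℕ → Γ.E => (x i, x (i + 1))) ⁻¹'
      {p : Γ.E × Γ.E | Γ.t p.1 = Γ.o p.2} := by
    ext x; simp [shift]
  rw [this]
  exact isClosed_iInter fun i => (isClosed_discrete _).preimage
    ((continuous_apply i).prodMk (continuous_apply (i + 1)))

theorem ClopenIn.isCompact {E : Set (ℕ → Γ.E)} (hEsub : E ⊆ Γ.shift) (hE : Γ.ClopenIn E) :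
    IsCompact E := by
  have : CompactSpace Γ.shift := isCompact_iff_compactSpace.1 Γ.isClosed_shift.isCompact
  have hcpt : IsCompact (Subtype.val '' (Subtype.val ⁻¹' E : Set Γ.shift)) :=
    Subtype.isCompact_iff.1 hE.isClosed.isCompact
  rwa [Set.image_preimage_eq_inter_range, Subtype.range_coe, Set.inter_eq_left.2 hEsub]
    at hcpt

theorem FinPath.injective_start_edges :
    Function.Injective fun α : Γ.FinPath => (α.start, α.edges) := by
  rintro ⟨v, l, _⟩ ⟨v', l', _⟩ h
  cases h
  rfl

theorem finite_setOf_length_lt (n : ℕ) : {α : Γ.FinPath | α.edges.length < n}.Finite := by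
  refine Set.Finite.of_finite_image ?_ FinPath.injective_start_edges.injOn
  refine (Set.finite_univ.prod (List.finite_length_lt Γ.E n)).subset ?_
  rintro _ ⟨α, hα, rfl⟩
  exact ⟨trivial, hα⟩

theorem pathOk_ofFn {z : ℕ → Γ.E} (hz : z ∈ Γ.shift) (n : ℕ) :
    ∀ j, Γ.pathOk (Γ.o (z j)) (List.ofFn fun i : Fin n => z (j + i)) := by
  induction n with
  | zero => intro j; simp [pathOk]
  | succ n ih =>
    intro j
    rw [List.ofFn_succ]
    refine ⟨by simp, ?_⟩
    simpa [hz j, Nat.add_assoc, Nat.add_comm 1] using ih (j + 1)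

theorem mem_cone_trivPath {v : Γ.V} {ω : ℕ → Γ.E} :
    ω ∈ Γ.cone (Γ.trivPath v) ↔ ω ∈ Γ.shift ∧ Γ.o (ω 0) = v := by
  simp [cone, trivPath]

theorem catPath_apply (α : Γ.FinPath) (ω : ℕ → Γ.E) (i : ℕ) :
    Γ.catPath α ω i =
      if h : i < α.edges.length then α.edges.get ⟨i, h⟩ else ω (i - α.edges.length) := by
  simp [catPath, splice, trivPath]

theorem pathOk.cat_mem_cone_trivPath : ∀ {l : List Γ.E} {v : Γ.V}, Γ.pathOk v l →
    ∀ {ω : ℕ → Γ.E}, ω ∈ Γ.cone (Γ.trivPath (Γ.pathEndAux v l)) →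
      (fun i => if h : i < l.length then l.get ⟨i, h⟩ else ω (i - l.length)) ∈
        Γ.cone (Γ.trivPath v)
  | [], _, _, ω, hω => by simpa [pathEndAux] using hω
  | e :: l, v, ⟨hev, hl⟩, ω, hω => by
    obtain ⟨hsh, h0⟩ := mem_cone_trivPath.1 (pathOk.cat_mem_cone_trivPath hl hω)
    set x := fun i => if h : i < l.length then l.get ⟨i, h⟩ else ω (i - l.length)
    have hsucc : ∀ i, (if h : i + 1 < (e :: l).length then (e :: l).get ⟨i + 1, h⟩
        else ω (i + 1 - (e :: l).length)) = x i := by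
      intro i
      simp [x, Nat.add_sub_add_right]
    refine mem_cone_trivPath.2 ⟨fun i => ?_, by simpa using hev⟩
    cases i with
    | zero => simpa [hsucc] using h0.symm
    | succ i => simpa only [hsucc] using hsh i

theorem catPath_mem_cone (α : Γ.FinPath) {ω : ℕ → Γ.E}
    (hω : ω ∈ Γ.cone (Γ.trivPath (Γ.pathEnd α))) : Γ.catPath α ω ∈ Γ.cone α := by
  have hcat : Γ.catPath α ω = _ := funext (catPath_apply α ω)
  obtain ⟨hsh, h0⟩ := mem_cone_trivPath.1 (hcat ▸ α.ok.cat_mem_cone_trivPath hω)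
  exact ⟨hsh, h0, fun i hi => by rw [catPath_apply, dif_pos hi]⟩

theorem FinPath.eq_of_mem_cone {α α' : Γ.FinPath} {x : ℕ → Γ.E} (hx : x ∈ Γ.cone α)
    (hx' : x ∈ Γ.cone α') (hlen : α.edges.length = α'.edges.length) : α = α' :=
  FinPath.injective_start_edges <| Prod.ext (hx.2.1.symm.trans hx'.2.1) <|
    List.ext_get hlen fun i h h' => (hx.2.2 i h).symm.trans (hx'.2.2 i h')

theorem apply_eq_of_catPath_eq_of_length_lt {α α' : Γ.FinPath} {ω : ℕ → Γ.E}
    (hlt : α.edges.length < α'.edges.length) (h : Γ.catPath α ω = Γ.catPath α' ω) (j : ℕ) :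
    ω j = α'.edges.get ⟨α.edges.length + j % (α'.edges.length - α.edges.length),
      by have := Nat.mod_lt j (Nat.sub_pos_of_lt hlt); omega⟩ := by
  set d := α'.edges.length - α.edges.length
  have hper : Function.Periodic ω d := fun j => by
    have := congrFun h (α'.edges.length + j)
    rwa [catPath_apply, catPath_apply, dif_neg (by omega), dif_neg (by omega),
      show α'.edges.length + j - α.edges.length = j + d by omega, Nat.add_sub_cancel_left]
      at this
  have hlt' : α.edges.length + j % d < α'.edges.length := by
    have := Nat.mod_lt j (show 0 < d by omega); omega
  have := congrFun h (α.edges.length + j % d)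
  rwa [catPath_apply, catPath_apply, dif_neg (by omega), dif_pos hlt', Nat.add_sub_cancel_left,
    hper.map_mod_nat] at this

theorem cone_trivPath_subsingleton_of_catPath_eq {α α' : Γ.FinPath} {v : Γ.V}
    (hlt : α.edges.length < α'.edges.length)
    (h : ∀ ω ∈ Γ.cone (Γ.trivPath v), Γ.catPath α ω = Γ.catPath α' ω) :
    (Γ.cone (Γ.trivPath v)).Subsingleton := fun ω hω ω' hω' => funext fun j => by
  rw [apply_eq_of_catPath_eq_of_length_lt hlt (h ω hω),
    apply_eq_of_catPath_eq_of_length_lt hlt (h ω' hω')]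

theorem cone_trivPath_nontrivial (hiso : Γ.NoIsolatedPoints) (hcones : Γ.NoEmptyCones)
    (v : Γ.V) : (Γ.cone (Γ.trivPath v)).Nontrivial := by
  rw [← Set.not_subsingleton_iff]
  intro hsub
  obtain ⟨ω₀, hω₀⟩ := hcones (Γ.trivPath v)
  have hopen : IsOpen ((fun x : Γ.shift => x.1 0) ⁻¹' {e | Γ.o e = v}) :=
    (isOpen_discrete _).preimage ((continuous_apply 0).comp continuous_subtype_val)
  refine hiso ⟨ω₀, hω₀.1⟩ ?_
  convert hopen using 1
  ext x
  constructor
  · rintro rfl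
    exact hω₀.2.1
  · intro hx
    exact Subtype.ext (hsub (mem_cone_trivPath.2 ⟨x.2, hx⟩) hω₀)

theorem FinPath.eq_of_forall_catPath_eq (hiso : Γ.NoIsolatedPoints)
    (hcones : Γ.NoEmptyCones) {α α' : Γ.FinPath} (hv : Γ.pathEnd α = Γ.pathEnd α')
    (h : ∀ ω ∈ Γ.cone (Γ.trivPath (Γ.pathEnd α)), Γ.catPath α ω = Γ.catPath α' ω) :
    α = α' := by
  have hnt := cone_trivPath_nontrivial hiso hcones (Γ.pathEnd α)
  rcases lt_trichotomy α.edges.length α'.edges.length with hlt | heq | hgt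
  · exact absurd (cone_trivPath_subsingleton_of_catPath_eq hlt h) hnt.not_subsingleton
  · obtain ⟨ω, hω⟩ := hcones (Γ.trivPath (Γ.pathEnd α))
    exact FinPath.eq_of_mem_cone (catPath_mem_cone α hω)
      (h ω hω ▸ catPath_mem_cone α' (hv ▸ hω)) heq
  · exact absurd (cone_trivPath_subsingleton_of_catPath_eq hgt fun ω hω => (h ω hω).symm)
      hnt.not_subsingleton

section Bar

variable {f : (ℕ → Γ.E) → ℕ → Γ.E} {α β : Γ.FinPath}

theorem IsBar.le_length (hb : Γ.IsBar f α β) (hne : (Γ.cone α).Nonempty)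
    (hsh : ∀ x ∈ Γ.cone α, f x ∈ Γ.shift) {n : ℕ}
    (hn : ∀ x ∈ Γ.cone α, ∀ y ∈ Γ.cone α, ∀ i < n, f x i = f y i) : n ≤ β.edges.length := by
  obtain ⟨x₀, hx₀⟩ := hne
  let γ : Γ.FinPath :=
    ⟨Γ.o (f x₀ 0), List.ofFn fun i : Fin n => f x₀ (0 + i), pathOk_ofFn (hsh x₀ hx₀) n 0⟩
  have hγ : f '' Γ.cone α ⊆ Γ.cone γ := by
    rintro _ ⟨y, hy, rfl⟩
    refine ⟨hsh y hy, (hb.1 ⟨y, hy, rfl⟩).2.1.trans (hb.1 ⟨x₀, hx₀, rfl⟩).2.1.symm,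
      fun i hi => ?_⟩
    simpa [γ] using hn y hy x₀ hx₀ i (by simpa [γ] using hi)
  simpa [γ] using (hb.2 γ hγ).2

theorem IsBar.barLen_eq (hb : Γ.IsBar f α β) (hne : (Γ.cone α).Nonempty)
    (hsh : ∀ x ∈ Γ.cone α, f x ∈ Γ.shift) : Γ.barLen f α = β.edges.length := by
  refine IsGreatest.csSup_eq ⟨fun x hx y hy i hi => ?_, fun n hn => hb.le_length hne hsh hn⟩
  rw [(hb.1 ⟨x, hx, rfl⟩).2.2 i hi, (hb.1 ⟨y, hy, rfl⟩).2.2 i hi]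

theorem IsBar.apply_catPath (hb : Γ.IsBar f α β) (hsh : ∀ x ∈ Γ.cone α, f x ∈ Γ.shift)
    {ω : ℕ → Γ.E} (hω : ω ∈ Γ.cone (Γ.trivPath (Γ.pathEnd α))) :
    f (Γ.catPath α ω) = Γ.catPath β ((Γ.localAction f α).2 ω) := by
  funext i
  rw [catPath_apply]
  split_ifs with hi
  · exact (hb.1 ⟨_, catPath_mem_cone α hω, rfl⟩).2.2 i hi
  · simp only [localAction, if_pos hω, hb.barLen_eq ⟨_, catPath_mem_cone α hω⟩ hsh]
    congr
    omega

end Bar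

variable {E : Set (ℕ → Γ.E)} {f : (ℕ → Γ.E) → ℕ → Γ.E}

theorem exists_length_lt_of_isBar (hcones : Γ.NoEmptyCones) (hE : IsCompact E)
    (hfc : ContinuousOn f E) (hsh : ∀ x ∈ E, f x ∈ Γ.shift) (β : Γ.FinPath) :
    ∃ m, ∀ α, Γ.cone α ⊆ E → Γ.IsBar f α β → α.edges.length < m := by
  obtain ⟨m, hm⟩ := hE.exists_forall_eq_of_mem_cylinder
    (g := fun x (i : Fin (β.edges.length + 1)) => f x i)
    (continuousOn_pi.2 fun i => (continuous_apply _).comp_continuousOn hfc)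
  refine ⟨m, fun α hαE hα => ?_⟩
  by_contra! hle
  have := hα.le_length (n := β.edges.length + 1) (hcones α) (fun x hx => hsh x (hαE hx))
    fun x hx y hy i hi => congrFun (hm y (hαE hy) x (hαE hx)
      fun j hj => (hx.2.2 j (by omega)).trans (hy.2.2 j (by omega)).symm) ⟨i, hi⟩
  omega

theorem injOn_localAction (hiso : Γ.NoIsolatedPoints) (hcones : Γ.NoEmptyCones)
    (hsh : ∀ x ∈ E, f x ∈ Γ.shift) (hinj : Set.InjOn f E) (β : Γ.FinPath) :
    Set.InjOn (Γ.localAction f) {α | Γ.cone α ⊆ E ∧ Γ.IsBar f α β} := by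
  rintro α ⟨hαE, hα⟩ α' ⟨hα'E, hα'⟩ hloc
  have hv : Γ.pathEnd α = Γ.pathEnd α' := congrArg Prod.fst hloc
  refine FinPath.eq_of_forall_catPath_eq hiso hcones hv fun ω hω => ?_
  have hω' : ω ∈ Γ.cone (Γ.trivPath (Γ.pathEnd α')) := hv ▸ hω
  refine hinj (hαE (catPath_mem_cone α hω)) (hα'E (catPath_mem_cone α' hω')) ?_
  rw [hα.apply_catPath (fun x hx => hsh x (hαE hx)) hω,
    hα'.apply_catPath (fun x hx => hsh x (hα'E hx)) hω', hloc]

end FinDigraph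

theorem bar_finite_to_one_general (Γ : FinDigraph)
    (hiso : Γ.NoIsolatedPoints) (hcones : Γ.NoEmptyCones)
    (E : Set (ℕ → Γ.E)) (hEsub : E ⊆ Γ.shift)
    (hEclopen : Γ.ClopenIn E)
    (f : (ℕ → Γ.E) → ℕ → Γ.E) (hfc : ContinuousOn f E) (hf : Γ.Nondegenerate f E)
    (β : Γ.FinPath) :
    {α : Γ.FinPath | Γ.cone α ⊆ E ∧ Γ.IsBar f α β}.Finite ∧
    ∀ k : ℕ, Set.InjOn f E →
      (Γ.localAction f '' {α : Γ.FinPath | Γ.cone α ⊆ E}).Finite →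
      (Γ.localAction f '' {α : Γ.FinPath | Γ.cone α ⊆ E}).ncard = k →
      {α : Γ.FinPath | Γ.cone α ⊆ E ∧ Γ.IsBar f α β}.ncard ≤ k := by
  obtain ⟨m, hm⟩ :=
    FinDigraph.exists_length_lt_of_isBar hcones (hEclopen.isCompact hEsub) hfc hf.1 β
  refine ⟨(FinDigraph.finite_setOf_length_lt m).subset fun α hα => hm α hα.1 hα.2,
    fun k hinj hfin hk => ?_⟩
  calc _ = (Γ.localAction f '' {α | Γ.cone α ⊆ E ∧ Γ.IsBar f α β}).ncard :=
        (FinDigraph.injOn_localAction hiso hcones hf.1 hinj β).ncard_image.symm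
    _ ≤ k := hk ▸ Set.ncard_le_ncard (Set.image_mono fun α hα => hα.1) hfin

/-- For a nondegenerate map `f : E → Σ_Γ`, the preimage under `f̄` of any finite path
`β` is finite; if moreover `f` is rational and injective with exactly `k` distinct
local actions, this preimage has at most `k` elements. -/
theorem bar_finite_to_one (Γ : FinDigraph)
    (hiso : Γ.NoIsolatedPoints) (hcones : Γ.NoEmptyCones)
    (E : Set (ℕ → Γ.E)) (hEsub : E ⊆ Γ.shift) (hEne : E.Nonempty)
    (hEclopen : Γ.ClopenIn E)
    (f : (ℕ → Γ.E) → ℕ → Γ.E) (hfc : ContinuousOn f E) (hf : Γ.Nondegenerate f E)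
    (β : Γ.FinPath) :
    {α : Γ.FinPath | Γ.cone α ⊆ E ∧ Γ.IsBar f α β}.Finite ∧
    ∀ k : ℕ, Set.InjOn f E →
      (Γ.localAction f '' {α : Γ.FinPath | Γ.cone α ⊆ E}).Finite →
      (Γ.localAction f '' {α : Γ.FinPath | Γ.cone α ⊆ E}).ncard = k →
      {α : Γ.FinPath | Γ.cone α ⊆ E ∧ Γ.IsBar f α β}.ncard ≤ k :=
  bar_finite_to_one_general Γ hiso hcones E hEsub hEclopen f hfc hf β

end
end
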